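/- arXiv:1511.02146 — 4 statements merged into one kernel-verified Lean document; each statement's English description precedes it below -/
import Mathlib

section
/- There exists a constant C' > 0 such that for all t > 0, ∫_{ℚ_p^n∖ℤ_p^n} e^{−t A(ξ)} dⁿξ ≤ C' t^{−n/β}; and there exists a constant C > 0 such that for all 0 < t ≤ 1, ∫_{ℚ_p^n∖ℤ_p^n} e^{−t A(ξ)} dⁿξ ≥ C t^{−n/β}. -/
/-!
Haar measure gives the ball of radius `p ^ m` in `ℚ_p^n` the measure `p ^ (n m)`: that ball is the
disjoint union of `p ^ n` translates of the ball of radius `p ^ (m - 1)`, one for each vector of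
`p`-adic digits.

For the upper bound, cut `{‖ξ‖ > 1}` into the shells `p ^ m ≤ ‖ξ‖ ≤ p ^ (m + 1)`, on which the
integrand is at most `exp (-t C₀ P ^ m)` with `P = p ^ β`. With `c = t C₀` and `γ = n / β` the
resulting series is `p ^ n c ^ (-γ) ∑ₘ φ (c P ^ m)` for `φ x = x ^ γ e ^ (-x)`, and this lacunary
sum is bounded uniformly in `c`: the bound `φ x ≤ x ^ γ` makes the terms with `c P ^ m < 1` a
geometric series, and `φ x = O(1 / x)` does the same for the others.

For the lower bound with `t ≤ 1`, pick `m` with `p ^ (m - 1) ≤ t ^ (-1 / β) < p ^ m`. On the annulus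
`1 < ‖ξ‖ ≤ p ^ m` the integrand is at least `exp (-C₁ p ^ β)`, and the annulus has measure
`p ^ (n m) - 1 ≥ t ^ (-n / β) / 2`.
-/

open MeasureTheory Filter Topology Metric

noncomputable instance qpnMeasurableSpace {p : ℕ} [Fact p.Prime] {n : ℕ} :
    MeasurableSpace (Fin n → ℚ_[p]) := borel _

instance qpnBorelSpace {p : ℕ} [Fact p.Prime] {n : ℕ} :
    BorelSpace (Fin n → ℚ_[p]) := ⟨rfl⟩

open scoped ENNReal

namespace Real

lemma rpow_mul_exp_neg_le {s : ℝ} (hs : 0 < s) {x : ℝ} (hx : 0 ≤ x) :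
    x ^ s * exp (-x) ≤ (s * exp (-1)) ^ s := by
  calc x ^ s * exp (-x) = (x * exp (-(x / s))) ^ s := by
        rw [mul_rpow hx (exp_pos _).le, ← exp_mul, neg_mul, div_mul_cancel₀ x hs.ne']
    _ = (s * (x / s * exp (-(x / s)))) ^ s := by rw [← mul_assoc, mul_div_cancel₀ x hs.ne']
    _ ≤ (s * exp (-1)) ^ s := by
        gcongr
        exact mul_exp_neg_le_exp_neg_one _

lemma sum_range_rpow_le_of_lt_one {P γ c : ℝ} (hP : 1 < P) (hγ : 0 < γ) (hc : 0 ≤ c) {M : ℕ}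
    (hM : ∀ m < M, c * P ^ m < 1) :
    ∑ m ∈ Finset.range M, (c * P ^ m) ^ γ ≤ (1 - (P ^ γ)⁻¹)⁻¹ := by
  have hP0 : 0 < P := one_pos.trans hP
  calc ∑ m ∈ Finset.range M, (c * P ^ m) ^ γ
      = ∑ j ∈ Finset.range M, (c * P ^ (M - 1 - j)) ^ γ := (Finset.sum_range_reflect _ M).symm
    _ ≤ ∑ j ∈ Finset.range M, ((P ^ γ)⁻¹) ^ j := by
        refine Finset.sum_le_sum fun j hj => ?_
        have hj : j < M := Finset.mem_range.1 hj
        have hlt : c * P ^ (M - 1 - j) * P ^ j < 1 := by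
          rw [mul_assoc, ← pow_add, Nat.sub_add_cancel (by omega)]
          exact hM _ (by omega)
        rw [inv_pow, rpow_pow_comm hP0.le, ← inv_rpow (by positivity)]
        gcongr
        rw [← one_div, le_div_iff₀ (by positivity)]
        exact hlt.le
    _ ≤ (1 - (P ^ γ)⁻¹)⁻¹ := by
        have := geom_sum_Ico_le_of_lt_one (m := 0) (n := M) (by positivity)
          (inv_lt_one_of_one_lt₀ (one_lt_rpow hP hγ))
        rwa [← Finset.range_eq_Ico, pow_zero, one_div] at this

lemma sum_range_div_mul_pow_le {P K c : ℝ} (hP : 1 < P) (hK : 0 ≤ K) (hc : 1 ≤ c) (N : ℕ) :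
    ∑ j ∈ Finset.range N, K / (c * P ^ j) ≤ K * (1 - P⁻¹)⁻¹ := by
  have hP0 : 0 < P := one_pos.trans hP
  calc ∑ j ∈ Finset.range N, K / (c * P ^ j)
      ≤ K * ∑ j ∈ Finset.range N, P⁻¹ ^ j := by
        rw [Finset.mul_sum]
        refine Finset.sum_le_sum fun j _ => ?_
        rw [inv_pow, ← div_eq_mul_inv]
        exact div_le_div_of_nonneg_left hK (by positivity)
          (le_mul_of_one_le_left (by positivity) hc)
    _ ≤ K * (1 - P⁻¹)⁻¹ := by
        have := geom_sum_Ico_le_of_lt_one (m := 0) (n := N) (by positivity)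
          (inv_lt_one_of_one_lt₀ hP)
        rw [← Finset.range_eq_Ico, pow_zero, one_div] at this
        gcongr

lemma sum_range_le_of_le_rpow_of_le_div {P γ K c : ℝ} (hP : 1 < P) (hγ : 0 < γ) (hc : 0 < c)
    {φ : ℝ → ℝ} (hφ : ∀ x, 0 < x → 0 ≤ φ x) (hsmall : ∀ x, 0 < x → φ x ≤ x ^ γ)
    (hlarge : ∀ x, 0 < x → φ x ≤ K / x) (N : ℕ) :
    ∑ m ∈ Finset.range N, φ (c * P ^ m) ≤ (1 - (P ^ γ)⁻¹)⁻¹ + K * (1 - P⁻¹)⁻¹ := by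
  have hP0 : 0 < P := one_pos.trans hP
  have hK : 0 ≤ K := by simpa using (hφ 1 one_pos).trans (hlarge 1 one_pos)
  have hex : ∃ M : ℕ, 1 ≤ c * P ^ M := by
    obtain ⟨M, hM⟩ := pow_unbounded_of_one_lt c⁻¹ hP
    exact ⟨M, by rw [← div_le_iff₀' hc, one_div]; exact hM.le⟩
  classical
  set M := Nat.find hex
  have head : ∑ m ∈ Finset.range M, φ (c * P ^ m) ≤ (1 - (P ^ γ)⁻¹)⁻¹ :=
    (Finset.sum_le_sum fun m _ => hsmall _ (by positivity)).trans
      (sum_range_rpow_le_of_lt_one hP hγ hc.le fun m hm => lt_of_not_ge (Nat.find_min hex hm))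
  have tail : ∑ j ∈ Finset.range N, φ (c * P ^ (M + j)) ≤ K * (1 - P⁻¹)⁻¹ := by
    refine (Finset.sum_le_sum fun j _ => ?_).trans
      (sum_range_div_mul_pow_le hP hK (Nat.find_spec hex) N)
    rw [pow_add, ← mul_assoc]
    exact hlarge _ (by positivity)
  calc ∑ m ∈ Finset.range N, φ (c * P ^ m)
      ≤ ∑ m ∈ Finset.range (M + N), φ (c * P ^ m) :=
        Finset.sum_le_sum_of_subset_of_nonneg (Finset.range_mono (by omega))
          fun m _ _ => hφ _ (by positivity)
    _ = _ := Finset.sum_range_add _ M N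
    _ ≤ _ := add_le_add head tail

lemma tsum_ofReal_rpow_pow_mul_exp_neg_le {P γ : ℝ} (hP : 1 < P) (hγ : 0 < γ) :
    ∃ K, 0 < K ∧ ∀ c, 0 < c →
      ∑' m : ℕ, ENNReal.ofReal ((P ^ γ) ^ m * exp (-(c * P ^ m))) ≤
        ENNReal.ofReal (K * c ^ (-γ)) := by
  have hP0 : 0 < P := one_pos.trans hP
  have hQ : 0 < 1 - (P ^ γ)⁻¹ := sub_pos.2 (inv_lt_one_of_one_lt₀ (one_lt_rpow hP hγ))
  have hP' : 0 < 1 - P⁻¹ := sub_pos.2 (inv_lt_one_of_one_lt₀ hP)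
  set K := (1 - (P ^ γ)⁻¹)⁻¹ + ((γ + 1) * exp (-1)) ^ (γ + 1) * (1 - P⁻¹)⁻¹
  refine ⟨K, by positivity, fun c hc => ?_⟩
  have hsum (N : ℕ) := sum_range_le_of_le_rpow_of_le_div hP hγ hc (φ := fun x => x ^ γ * exp (-x))
    (fun x hx => by positivity)
    (fun x hx => mul_le_of_le_one_right (by positivity) (exp_le_one_iff.2 (by linarith)))
    (fun x hx => by
      rw [le_div_iff₀ hx, mul_right_comm, ← rpow_add_one hx.ne']
      exact rpow_mul_exp_neg_le (by linarith) hx.le) N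
  have hterm : ∀ m : ℕ, (P ^ γ) ^ m * exp (-(c * P ^ m)) =
      c ^ (-γ) * ((c * P ^ m) ^ γ * exp (-(c * P ^ m))) := fun m => by
    rw [mul_rpow hc.le (by positivity), rpow_neg hc.le, rpow_pow_comm hP0.le]
    field_simp
  calc ∑' m : ℕ, ENNReal.ofReal ((P ^ γ) ^ m * exp (-(c * P ^ m)))
      = ENNReal.ofReal (c ^ (-γ)) *
          ∑' m : ℕ, ENNReal.ofReal ((c * P ^ m) ^ γ * exp (-(c * P ^ m))) := by
        simp_rw [hterm, ENNReal.ofReal_mul (by positivity : 0 ≤ c ^ (-γ))]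
        exact ENNReal.tsum_mul_left
    _ ≤ ENNReal.ofReal (c ^ (-γ)) * ENNReal.ofReal K := by
        gcongr
        refine ENNReal.tsum_le_of_sum_range_le fun N => ?_
        rw [← ENNReal.ofReal_sum_of_nonneg fun m _ => by positivity]
        exact ENNReal.ofReal_le_ofReal (hsum N)
    _ = ENNReal.ofReal (K * c ^ (-γ)) := by
        rw [← ENNReal.ofReal_mul (by positivity), mul_comm]

lemma exists_nat_pow_succ_scale {q β t : ℝ} (hq : 1 < q) (hβ : 0 < β) (ht : 0 < t) (ht1 : t ≤ 1)
    (n : ℕ) :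
    ∃ k : ℕ, t * (q ^ (k + 1)) ^ β ≤ q ^ β ∧ t ^ (-((n : ℝ) / β)) ≤ (q ^ n) ^ (k + 1) := by
  set s := t ^ (-β⁻¹)
  have hs : 1 ≤ s := one_le_rpow_of_pos_of_le_one_of_nonpos ht ht1 (by simp [hβ.le])
  obtain ⟨k, hks, hsk⟩ := exists_nat_pow_near hs hq
  refine ⟨k, ?_, ?_⟩
  · calc t * (q ^ (k + 1)) ^ β ≤ t * (q * s) ^ β := by rw [pow_succ']; gcongr
      _ = q ^ β := by
          rw [mul_rpow (by positivity) (by positivity), ← rpow_mul ht.le, neg_mul,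
            inv_mul_cancel₀ hβ.ne', rpow_neg_one]
          field_simp
  · calc t ^ (-((n : ℝ) / β)) = s ^ n := by
          rw [← rpow_natCast, ← rpow_mul ht.le]
          ring_nf
      _ ≤ (q ^ n) ^ (k + 1) := by
          rw [← pow_mul, mul_comm, pow_mul]
          gcongr

end Real

section NormedGroup

variable {E : Type*} [NormedAddCommGroup E] [MeasurableSpace E] [OpensMeasurableSpace E]

lemma setLIntegral_one_lt_norm_le_tsum (μ : Measure E) {R : ℝ} (hR : 1 < R) {F : E → ℝ≥0∞}
    {b : ℕ → ℝ≥0∞} (hF : ∀ m : ℕ, ∀ ξ : E, R ^ m ≤ ‖ξ‖ → F ξ ≤ b m) :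
    ∫⁻ ξ in {ξ | 1 < ‖ξ‖}, F ξ ∂μ ≤ ∑' m : ℕ, μ (closedBall 0 (R ^ (m + 1))) * b m := by
  set S : ℕ → Set E := fun m => {ξ | R ^ m ≤ ‖ξ‖} ∩ closedBall 0 (R ^ (m + 1))
  have hcover : {ξ : E | 1 < ‖ξ‖} ⊆ ⋃ m, S m := fun ξ hξ => by
    obtain ⟨m, hm, hm'⟩ := exists_nat_pow_near (le_of_lt hξ) hR
    exact Set.mem_iUnion.2 ⟨m, hm, mem_closedBall_zero_iff.2 hm'.le⟩
  have hS : ∀ m, MeasurableSet (S m) := fun m =>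
    (measurableSet_le measurable_const measurable_norm).inter measurableSet_closedBall
  calc ∫⁻ ξ in {ξ | 1 < ‖ξ‖}, F ξ ∂μ ≤ ∫⁻ ξ in ⋃ m, S m, F ξ ∂μ := lintegral_mono_set hcover
    _ ≤ ∑' m, ∫⁻ ξ in S m, F ξ ∂μ := lintegral_iUnion_le _ _
    _ ≤ ∑' m, ∫⁻ _ in S m, b m ∂μ :=
        ENNReal.tsum_le_tsum fun m => setLIntegral_mono' (hS m) fun ξ hξ => hF m ξ hξ.1
    _ ≤ ∑' m : ℕ, μ (closedBall 0 (R ^ (m + 1))) * b m := by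
        refine ENNReal.tsum_le_tsum fun m => ?_
        rw [setLIntegral_const, mul_comm]
        gcongr
        exact Set.inter_subset_right

lemma measurable_comp_norm_of_countable {Y : Type*} [MeasurableSpace Y]
    (h : (Set.range (‖·‖ : E → ℝ)).Countable) (F : ℝ → Y) : Measurable fun x : E => F ‖x‖ := by
  have := h.to_subtype
  exact (measurable_of_countable (F ∘ Subtype.val)).comp measurable_norm.rangeFactorization

end NormedGroup

lemma range_pi_norm_subset {ι E : Type*} [Fintype ι] [SeminormedAddGroup E] :
    Set.range (‖·‖ : (ι → E) → ℝ) ⊆ insert 0 (Set.range (‖·‖ : E → ℝ)) := by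
  rintro _ ⟨f, rfl⟩
  cases isEmpty_or_nonempty ι
  · exact Or.inl (by simp [Subsingleton.elim f 0])
  · obtain ⟨i, hi⟩ := (IsGreatest.pi_norm f).1
    exact Or.inr ⟨f i, hi⟩

namespace Padic

variable {p : ℕ} [Fact p.Prime]

lemma exists_fin_norm_sub_le_inv {b : ℚ_[p]} (hb : ‖b‖ ≤ 1) :
    ∃ d : Fin p, ‖b - (d : ℕ)‖ ≤ (p : ℝ)⁻¹ := by
  obtain ⟨d, hdp, hd⟩ := PadicInt.exists_mem_range ⟨b, hb⟩
  refine ⟨⟨d, hdp⟩, ?_⟩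
  have hlt : ‖b - d‖ < (p : ℝ) ^ (0 : ℤ) := by
    have hcoe : (((⟨b, hb⟩ - d : ℤ_[p]) : ℚ_[p])) = b - d := rfl
    simpa [← hcoe, PadicInt.padic_norm_e_of_padicInt] using PadicInt.mem_nonunits.1 hd
  simpa using (norm_lt_pow_iff_norm_le_pow_sub_one _ _).1 hlt

lemma one_le_norm_natCast_sub {d d' : ℕ} (hd : d < p) (hd' : d' < p) (hne : d ≠ d') :
    1 ≤ ‖(d : ℚ_[p]) - d'‖ := by
  by_contra! hlt
  have hdvd : (p : ℤ) ∣ (d : ℤ) - d' := by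
    rw [← norm_intCast_lt_one_iff]
    simpa using hlt
  have := Int.eq_zero_of_abs_lt_dvd hdvd (by rw [abs_lt]; omega)
  omega

lemma countable_range_norm :
    (Set.range (‖·‖ : ℚ_[p] → ℝ)).Countable := by
  refine ((Set.countable_range fun z : ℤ => (p : ℝ) ^ z).insert 0).mono ?_
  rintro _ ⟨x, rfl⟩
  by_cases hx : x = 0
  · exact Or.inl (by simp [hx])
  · exact Or.inr ⟨_, (norm_eq_zpow_neg_valuation hx).symm⟩

section Ball

open Function

variable {n : ℕ}

noncomputable def digitVector (u : ℚ_[p]) (v : Fin n → Fin p) : Fin n → ℚ_[p] :=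
  fun i => ((v i : ℕ) : ℚ_[p]) * u

lemma closedBall_norm_eq_iUnion_digitVector {u : ℚ_[p]} (hu : u ≠ 0) :
    closedBall (0 : Fin n → ℚ_[p]) ‖u‖ =
      ⋃ v : Fin n → Fin p, closedBall (digitVector u v) ((p : ℝ)⁻¹ * ‖u‖) := by
  have hu' : 0 < ‖u‖ := norm_pos_iff.2 hu
  ext ξ
  simp only [mem_closedBall_iff_norm, sub_zero, Set.mem_iUnion]
  constructor
  · intro hξ
    have hcoord : ∀ i, ‖ξ i / u‖ ≤ 1 := fun i => by
      rw [norm_div, div_le_one hu']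
      exact (norm_le_pi_norm ξ i).trans hξ
    choose v hv using fun i => exists_fin_norm_sub_le_inv (hcoord i)
    refine ⟨v, (pi_norm_le_iff_of_nonneg (by positivity)).2 fun i => ?_⟩
    calc ‖ξ i - ((v i : ℕ) : ℚ_[p]) * u‖ = ‖ξ i / u - (v i : ℕ)‖ * ‖u‖ := by
          rw [← norm_mul, sub_mul, div_mul_cancel₀ _ hu]
      _ ≤ (p : ℝ)⁻¹ * ‖u‖ := by gcongr; exact hv i
  · rintro ⟨v, hv⟩
    have hp : (p : ℝ)⁻¹ ≤ 1 := inv_le_one_of_one_le₀ (by exact_mod_cast (Fact.out : p.Prime).one_le)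
    have hc : ‖digitVector u v‖ ≤ ‖u‖ :=
      (pi_norm_le_iff_of_nonneg hu'.le).2 fun i => by
        rw [digitVector, norm_mul]
        exact mul_le_of_le_one_left hu'.le (by simpa using norm_int_le_one (p := p) (v i))
    calc ‖ξ‖ = ‖(ξ - digitVector u v) + digitVector u v‖ := by rw [sub_add_cancel]
      _ ≤ max _ _ := IsUltrametricDist.norm_add_le_max _ _
      _ ≤ ‖u‖ := max_le (hv.trans (mul_le_of_le_one_left hu'.le hp)) hc

lemma pairwise_disjoint_closedBall_digitVector {u : ℚ_[p]} (hu : u ≠ 0) :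
    Pairwise (Disjoint on fun v : Fin n → Fin p =>
      closedBall (digitVector u v) ((p : ℝ)⁻¹ * ‖u‖)) := by
  intro v w hvw
  obtain ⟨i, hi⟩ := Function.ne_iff.1 hvw
  refine Set.disjoint_left.2 fun ξ hξv hξw => ?_
  have hfar : ‖u‖ ≤ dist (digitVector u v) (digitVector u w) :=
    calc ‖u‖ ≤ ‖((v i : ℕ) - (w i : ℕ) : ℚ_[p])‖ * ‖u‖ :=
          le_mul_of_one_le_left (norm_nonneg u)
            (one_le_norm_natCast_sub (v i).2 (w i).2 (Fin.val_ne_of_ne hi))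
      _ = ‖(digitVector u v - digitVector u w) i‖ := by
          rw [← norm_mul, sub_mul]
          rfl
      _ ≤ dist (digitVector u v) (digitVector u w) := by
          rw [dist_eq_norm]
          exact norm_le_pi_norm _ i
  have hnear : dist (digitVector u v) (digitVector u w) ≤ (p : ℝ)⁻¹ * ‖u‖ :=
    (IsUltrametricDist.dist_triangle_max _ ξ _).trans (max_le (mem_closedBall'.1 hξv) hξw)
  have hp : (p : ℝ)⁻¹ < 1 := inv_lt_one_of_one_lt₀ (by exact_mod_cast (Fact.out : p.Prime).one_lt)
  have hu' : 0 < ‖u‖ := norm_pos_iff.2 hu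
  nlinarith

lemma measure_closedBall_norm (μ : Measure (Fin n → ℚ_[p])) [μ.IsAddHaarMeasure] {u : ℚ_[p]}
    (hu : u ≠ 0) :
    μ (closedBall 0 ‖u‖) = (p : ℝ≥0∞) ^ n * μ (closedBall 0 ((p : ℝ)⁻¹ * ‖u‖)) := by
  rw [closedBall_norm_eq_iUnion_digitVector hu,
    measure_iUnion (pairwise_disjoint_closedBall_digitVector hu) fun _ => measurableSet_closedBall]
  simp [Measure.addHaar_closedBall_center]

lemma measure_closedBall_pow (μ : Measure (Fin n → ℚ_[p])) [μ.IsAddHaarMeasure] (m : ℕ) :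
    μ (closedBall 0 ((p : ℝ) ^ m)) = ((p : ℝ≥0∞) ^ n) ^ m * μ (closedBall 0 1) := by
  induction m with
  | zero => simp
  | succ m ih =>
    have hu : ((p : ℚ_[p])⁻¹ ^ (m + 1)) ≠ 0 := by simp [(Fact.out : p.Prime).ne_zero]
    have hnorm : ‖(p : ℚ_[p])⁻¹ ^ (m + 1)‖ = (p : ℝ) ^ (m + 1) := by
      rw [norm_pow, norm_inv, Padic.norm_p, inv_inv]
    have hp : (p : ℝ) ≠ 0 := by exact_mod_cast (Fact.out : p.Prime).ne_zero
    rw [← hnorm, measure_closedBall_norm μ hu, hnorm, pow_succ', inv_mul_cancel_left₀ hp, ih,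
      pow_succ', mul_assoc]

end Ball

section HeatTrace

open Real

variable {n : ℕ}

lemma setLIntegral_exp_neg_le (μ : Measure (Fin n → ℚ_[p])) [μ.IsAddHaarMeasure] (hn : 0 < n)
    {β C₀ : ℝ} (hβ : 0 < β) (hC₀ : 0 < C₀) {A : (Fin n → ℚ_[p]) → ℝ}
    (hlow : ∀ ξ, C₀ * ‖ξ‖ ^ β ≤ A ξ) :
    ∃ K, 0 < K ∧ ∀ t, 0 < t →
      ∫⁻ ξ in {ξ | 1 < ‖ξ‖}, ENNReal.ofReal (exp (-(t * A ξ))) ∂μ ≤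
        μ (closedBall 0 1) * ENNReal.ofReal (K * t ^ (-((n : ℝ) / β))) := by
  have hp : (1 : ℝ) < p := by exact_mod_cast (Fact.out : p.Prime).one_lt
  set γ := (n : ℝ) / β
  set P := (p : ℝ) ^ β
  have hPγ : P ^ γ = (p : ℝ) ^ n := by
    rw [← rpow_mul (by positivity), mul_div_cancel₀ _ hβ.ne', rpow_natCast]
  obtain ⟨K, hK, hsum⟩ := tsum_ofReal_rpow_pow_mul_exp_neg_le (one_lt_rpow hp hβ)
    (by positivity : 0 < γ)
  refine ⟨p ^ n * K * C₀ ^ (-γ), by positivity, fun t ht => ?_⟩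
  have hdecay : ∀ m : ℕ, ∀ ξ : Fin n → ℚ_[p], (p : ℝ) ^ m ≤ ‖ξ‖ →
      ENNReal.ofReal (exp (-(t * A ξ))) ≤ ENNReal.ofReal (exp (-(t * C₀ * P ^ m))) := by
    intro m ξ hξ
    refine ENNReal.ofReal_le_ofReal (exp_le_exp.2 (neg_le_neg ?_))
    calc t * C₀ * P ^ m = t * (C₀ * ((p : ℝ) ^ m) ^ β) := by
          rw [← rpow_pow_comm (by positivity), mul_assoc]
      _ ≤ t * A ξ := by
          gcongr
          exact (mul_le_mul_of_nonneg_left (by gcongr) hC₀.le).trans (hlow ξ)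
  calc ∫⁻ ξ in {ξ | 1 < ‖ξ‖}, ENNReal.ofReal (exp (-(t * A ξ))) ∂μ
      ≤ ∑' m : ℕ, μ (closedBall 0 ((p : ℝ) ^ (m + 1))) *
          ENNReal.ofReal (exp (-(t * C₀ * P ^ m))) :=
        setLIntegral_one_lt_norm_le_tsum μ hp hdecay
    _ = μ (closedBall 0 1) * ENNReal.ofReal ((p : ℝ) ^ n) *
          ∑' m : ℕ, ENNReal.ofReal ((P ^ γ) ^ m * exp (-(t * C₀ * P ^ m))) := by
        rw [← ENNReal.tsum_mul_left]
        congr 1 with m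
        have hcast : ENNReal.ofReal ((p : ℝ) ^ n) = (p : ℝ≥0∞) ^ n := by
          rw [ENNReal.ofReal_pow (Nat.cast_nonneg p), ENNReal.ofReal_natCast]
        rw [measure_closedBall_pow, hPγ, ENNReal.ofReal_mul (by positivity),
          hcast, ENNReal.ofReal_pow (by positivity), hcast]
        ring
    _ ≤ μ (closedBall 0 1) * ENNReal.ofReal ((p : ℝ) ^ n) *
          ENNReal.ofReal (K * (t * C₀) ^ (-γ)) := by
        gcongr
        exact hsum _ (by positivity)
    _ = μ (closedBall 0 1) * ENNReal.ofReal (p ^ n * K * C₀ ^ (-γ) * t ^ (-γ)) := by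
        rw [mul_assoc, ← ENNReal.ofReal_mul (by positivity), mul_rpow ht.le hC₀.le]
        ring_nf

lemma measureReal_closedBall_pow_sdiff_closedBall_one (μ : Measure (Fin n → ℚ_[p]))
    [μ.IsAddHaarMeasure] (m : ℕ) :
    μ.real (closedBall 0 ((p : ℝ) ^ m) \ closedBall 0 1) =
      (((p : ℝ) ^ n) ^ m - 1) * μ.real (closedBall 0 1) := by
  have hp : (1 : ℝ) ≤ p := by exact_mod_cast (Fact.out : p.Prime).one_le
  rw [measureReal_sdiff (closedBall_subset_closedBall (one_le_pow₀ hp)) measurableSet_closedBall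
      measure_closedBall_lt_top.ne,
    measureReal_def, measure_closedBall_pow, ENNReal.toReal_mul, ← measureReal_def]
  simp only [ENNReal.toReal_pow, ENNReal.toReal_natCast]
  ring

lemma le_setIntegral_exp_neg (μ : Measure (Fin n → ℚ_[p])) [μ.IsAddHaarMeasure] (hn : 0 < n)
    {β C₁ : ℝ} (hβ : 0 < β) (hC₁ : 0 ≤ C₁) {A : (Fin n → ℚ_[p]) → ℝ}
    (hupp : ∀ ξ, A ξ ≤ C₁ * ‖ξ‖ ^ β) {t : ℝ} (ht : 0 < t) (ht1 : t ≤ 1)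
    (hint : IntegrableOn (fun ξ => exp (-(t * A ξ))) {ξ | 1 < ‖ξ‖} μ) :
    μ.real (closedBall 0 1) * (exp (-(C₁ * p ^ β)) / 2) * t ^ (-((n : ℝ) / β)) ≤
      ∫ ξ in {ξ | 1 < ‖ξ‖}, exp (-(t * A ξ)) ∂μ := by
  have hp : (1 : ℝ) < p := by exact_mod_cast (Fact.out : p.Prime).one_lt
  obtain ⟨k, hkβ, hkn⟩ := exists_nat_pow_succ_scale hp hβ ht ht1 n
  set U := closedBall (0 : Fin n → ℚ_[p]) ((p : ℝ) ^ (k + 1)) \ closedBall 0 1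
  have hUI : U ⊆ {ξ | 1 < ‖ξ‖} := fun ξ hξ => by simpa using hξ.2
  have hε : ∀ ξ ∈ U, exp (-(C₁ * p ^ β)) ≤ exp (-(t * A ξ)) := by
    intro ξ hξ
    refine exp_le_exp.2 (neg_le_neg ?_)
    calc t * A ξ ≤ C₁ * (t * ‖ξ‖ ^ β) := by nlinarith [hupp ξ]
      _ ≤ C₁ * (t * ((p : ℝ) ^ (k + 1)) ^ β) := by
          gcongr
          exact mem_closedBall_zero_iff.1 hξ.1
      _ ≤ C₁ * p ^ β := by gcongr
  have hvol : t ^ (-((n : ℝ) / β)) / 2 ≤ ((p : ℝ) ^ n) ^ (k + 1) - 1 := by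
    have htwo : 2 ≤ ((p : ℝ) ^ n) ^ (k + 1) :=
      calc (2 : ℝ) ≤ p := by exact_mod_cast (Fact.out : p.Prime).two_le
        _ ≤ (p : ℝ) ^ n := le_self_pow₀ hp.le hn.ne'
        _ ≤ ((p : ℝ) ^ n) ^ (k + 1) := le_self_pow₀ (one_le_pow₀ hp.le) (Nat.succ_ne_zero k)
    linarith
  calc μ.real (closedBall 0 1) * (exp (-(C₁ * p ^ β)) / 2) * t ^ (-((n : ℝ) / β))
      ≤ exp (-(C₁ * p ^ β)) * μ.real U := by
        rw [measureReal_closedBall_pow_sdiff_closedBall_one]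
        linarith [mul_le_mul_of_nonneg_left hvol
          (by positivity : 0 ≤ exp (-(C₁ * p ^ β)) * μ.real (closedBall 0 1))]
    _ ≤ ∫ ξ in U, exp (-(t * A ξ)) ∂μ :=
        setIntegral_ge_of_const_le_real (measurableSet_closedBall.diff measurableSet_closedBall)
          ((measure_mono Set.sdiff_subset).trans_lt measure_closedBall_lt_top).ne hε
          (hint.mono_set hUI)
    _ ≤ ∫ ξ in {ξ | 1 < ‖ξ‖}, exp (-(t * A ξ)) ∂μ :=
        setIntegral_mono_set hint (ae_of_all _ fun _ => (exp_pos _).le) hUI.eventuallyLE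

end HeatTrace

end Padic

/-- There is `C' > 0` with `∫_{ℚ_p^n∖ℤ_p^n} e^{−tA(ξ)} dⁿξ ≤ C' t^{−n/β}` for all
`t > 0`, and `C > 0` with `C t^{−n/β} ≤ ∫_{ℚ_p^n∖ℤ_p^n} e^{−tA(ξ)} dⁿξ` for all `0 < t ≤ 1`. -/
theorem heat_trace_two_sided_bound {p n : ℕ} [Fact p.Prime] (hn : 0 < n)
    (μ : Measure (Fin n → ℚ_[p])) [μ.IsAddHaarMeasure]
    (hμ : μ (closedBall (0 : Fin n → ℚ_[p]) 1) = 1)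
    (β C₀ C₁ : ℝ) (hβ : 0 < β) (hC₀ : 0 < C₀) (hC₁ : 0 < C₁)
    (A : (Fin n → ℚ_[p]) → ℝ) (g : ℝ → ℝ)
    (hrad : ∀ ξ : Fin n → ℚ_[p], A ξ = g ‖ξ‖)
    (hlow : ∀ ξ : Fin n → ℚ_[p], C₀ * ‖ξ‖ ^ β ≤ A ξ)
    (hupp : ∀ ξ : Fin n → ℚ_[p], A ξ ≤ C₁ * ‖ξ‖ ^ β) :
    (∃ C' : ℝ, 0 < C' ∧ ∀ t : ℝ, 0 < t →
      (∫ ξ in {ξ : Fin n → ℚ_[p] | 1 < ‖ξ‖}, Real.exp (-(t * A ξ)) ∂μ) ≤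
        C' * t ^ (-((n : ℝ) / β))) ∧
    (∃ C : ℝ, 0 < C ∧ ∀ t : ℝ, 0 < t → t ≤ 1 →
      C * t ^ (-((n : ℝ) / β)) ≤
        ∫ ξ in {ξ : Fin n → ℚ_[p] | 1 < ‖ξ‖}, Real.exp (-(t * A ξ)) ∂μ) := by
  have hA : Measurable A := by
    have hcount : (Set.range (‖·‖ : (Fin n → ℚ_[p]) → ℝ)).Countable :=
      (Padic.countable_range_norm.insert 0).mono range_pi_norm_subset
    simpa only [← funext hrad] using measurable_comp_norm_of_countable hcount g
  obtain ⟨K, hK, hlint⟩ := Padic.setLIntegral_exp_neg_le μ hn hβ hC₀ hlow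
  simp only [hμ, one_mul] at hlint
  have hnonneg (t : ℝ) : 0 ≤ᵐ[μ.restrict {ξ | 1 < ‖ξ‖}] fun ξ => Real.exp (-(t * A ξ)) :=
    ae_of_all _ fun _ => (Real.exp_pos _).le
  have hint (t : ℝ) (ht : 0 < t) : IntegrableOn (fun ξ => Real.exp (-(t * A ξ))) {ξ | 1 < ‖ξ‖} μ :=
    ⟨(by fun_prop : Measurable _).aestronglyMeasurable,
      (hasFiniteIntegral_iff_ofReal (hnonneg t)).2 ((hlint t ht).trans_lt ENNReal.ofReal_lt_top)⟩
  refine ⟨⟨K, hK, fun t ht => ?_⟩,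
    ⟨Real.exp (-(C₁ * p ^ β)) / 2, by positivity, fun t ht ht1 => ?_⟩⟩
  · rw [integral_eq_lintegral_of_nonneg_ae (hnonneg t) (hint t ht).aestronglyMeasurable]
    exact ENNReal.toReal_le_of_le_ofReal (by positivity) (hlint t ht)
  · simpa [measureReal_def, hμ] using
      Padic.le_setIntegral_exp_neg μ hn hβ hC₁.le hupp ht ht1 (hint t ht)
end

section
/- The spectral zeta function ζ(s;A_β) has a simple pole at s = n/β in the following sense: there exist constants 0 < c ≤ C such that c ≤ (1 − p^{n−βσ}) ζ(σ;A_β) ≤ C for every real σ with n/β < σ ≤ n/β + 1; in particular ζ(σ;A_β) → +∞ as σ → (n/β)⁺ at the exact rate (σ − n/β)^{−1}. -/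
open MeasureTheory Filter Topology Metric

/-- The spectral zeta function `ζ(σ;A_β)` has a simple pole at `σ = n/β`:
there are constants `0 < c ≤ C` with `c ≤ (1 − p^{n−βσ}) ζ(σ;A_β) ≤ C` for all real
`σ` with `n/β < σ ≤ n/β + 1`. -/
theorem spectral_zeta_simple_pole {p n : ℕ} [Fact p.Prime] (hn : 0 < n)
    (μ : Measure (Fin n → ℚ_[p])) [μ.IsAddHaarMeasure]
    (hμ : μ (closedBall (0 : Fin n → ℚ_[p]) 1) = 1)
    (β C₀ C₁ : ℝ) (hβ : 0 < β) (hC₀ : 0 < C₀) (hC₁ : 0 < C₁)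
    (A : (Fin n → ℚ_[p]) → ℝ) (g : ℝ → ℝ)
    (hrad : ∀ ξ : Fin n → ℚ_[p], A ξ = g ‖ξ‖)
    (hlow : ∀ ξ : Fin n → ℚ_[p], C₀ * ‖ξ‖ ^ β ≤ A ξ)
    (hupp : ∀ ξ : Fin n → ℚ_[p], A ξ ≤ C₁ * ‖ξ‖ ^ β) :
    ∃ c C : ℝ, 0 < c ∧ c ≤ C ∧
      ∀ σ : ℝ, (n : ℝ) / β < σ → σ ≤ (n : ℝ) / β + 1 →
        c ≤ (1 - (p : ℝ) ^ ((n : ℝ) - β * σ)) *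
              (∑' m : ℕ, (p : ℝ) ^ ((m + 1) * n) * (1 - (p : ℝ) ^ (-(n : ℤ))) *
                (g ((p : ℝ) ^ (m + 1))) ^ (-σ)) ∧
          (1 - (p : ℝ) ^ ((n : ℝ) - β * σ)) *
              (∑' m : ℕ, (p : ℝ) ^ ((m + 1) * n) * (1 - (p : ℝ) ^ (-(n : ℤ))) *
                (g ((p : ℝ) ^ (m + 1))) ^ (-σ)) ≤ C := by
  haveI : Nonempty (Fin n) := ⟨⟨0, hn⟩⟩
  have hp1 : (1 : ℝ) < (p : ℝ) := by
    exact_mod_cast (Fact.out : p.Prime).one_lt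
  have hp0 : (0 : ℝ) < (p : ℝ) := lt_trans one_pos hp1
  set P : ℝ := (p : ℝ) with hP
  set D : ℝ := 1 - P ^ (-(n : ℤ)) with hD
  have hD0 : 0 < D := by
    have h1 : P ^ (-(n : ℤ)) < 1 := by
      rw [zpow_neg, zpow_natCast]
      rw [inv_lt_one_iff₀]
      right
      exact one_lt_pow₀ hp1 (by omega)
    linarith
  have hD1 : D ≤ 1 := by
    have : 0 < P ^ (-(n : ℤ)) := zpow_pos hp0 _
    simp only [hD]; linarith
  -- norm of the witness point on each sphere
  have hnorm : ∀ m : ℕ, ‖(fun _ : Fin n => ((p : ℚ_[p]) ^ (-((m : ℤ) + 1))))‖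
      = P ^ (m + 1) := by
    intro m
    rw [pi_norm_const, Padic.norm_p_zpow]
    rw [neg_neg]
    rw [show ((m : ℤ) + 1) = ((m + 1 : ℕ) : ℤ) by push_cast; ring, zpow_natCast]
  -- the value of g on each sphere
  have hg : ∀ m : ℕ, C₀ * P ^ (β * (m + 1)) ≤ g (P ^ (m + 1)) ∧
      g (P ^ (m + 1)) ≤ C₁ * P ^ (β * (m + 1)) := by
    intro m
    set ξ : Fin n → ℚ_[p] := fun _ => ((p : ℚ_[p]) ^ (-((m : ℤ) + 1))) with hξ
    have h1 := hlow ξ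
    have h2 := hupp ξ
    rw [hrad ξ, hnorm m] at h1 h2
    have hpow : (P ^ (m + 1) : ℝ) ^ β = P ^ (β * (m + 1)) := by
      rw [← Real.rpow_natCast P (m + 1), ← Real.rpow_mul hp0.le]
      push_cast; ring_nf
    rw [hpow] at h1 h2
    exact ⟨h1, h2⟩
  have hgpos : ∀ m : ℕ, 0 < g (P ^ (m + 1)) := fun m =>
    lt_of_lt_of_le (by positivity) (hg m).1
  set e : ℝ := (n : ℝ) / β + 1 with he
  have he0 : 0 < e := by positivity
  set c : ℝ := (max C₁ 1) ^ (-e) * D * P ^ (-β) with hc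
  set Cc : ℝ := (min C₀ 1) ^ (-e) * D with hCc
  have hc0 : 0 < c := by
    have : (0:ℝ) < max C₁ 1 := lt_max_of_lt_right one_pos
    positivity
  -- the main per-σ bounds
  have key : ∀ σ : ℝ, (n : ℝ) / β < σ → σ ≤ (n : ℝ) / β + 1 →
      c ≤ (1 - P ^ ((n : ℝ) - β * σ)) *
            (∑' m : ℕ, P ^ ((m + 1) * n) * D * (g (P ^ (m + 1))) ^ (-σ)) ∧
        (1 - P ^ ((n : ℝ) - β * σ)) *
            (∑' m : ℕ, P ^ ((m + 1) * n) * D * (g (P ^ (m + 1))) ^ (-σ)) ≤ Cc := by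
    intro σ hσl hσu
    have hσ0 : 0 < σ := lt_of_le_of_lt (by positivity) hσl
    set r : ℝ := P ^ ((n : ℝ) - β * σ) with hr
    have hr0 : 0 < r := Real.rpow_pos_of_pos hp0 _
    have hexp_neg : (n : ℝ) - β * σ < 0 := by
      have : (n : ℝ) < β * σ := by
        have := (div_lt_iff₀ hβ).mp hσl
        linarith [this]
      linarith
    have hr1 : r < 1 := Real.rpow_lt_one_of_one_lt_of_neg hp1 hexp_neg
    have hrlow : P ^ (-β) ≤ r := by
      apply Real.rpow_le_rpow_of_exponent_le hp1.le
      have : β * σ ≤ β * ((n:ℝ)/β + 1) := by nlinarith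
      have hb : β * ((n:ℝ)/β) = (n:ℝ) := by field_simp
      nlinarith
    -- termwise bounds
    have hterm_up : ∀ m : ℕ, P ^ ((m + 1) * n) * D * (g (P ^ (m + 1))) ^ (-σ)
        ≤ D * C₀ ^ (-σ) * r ^ (m + 1) := by
      intro m
      have hxg : (g (P ^ (m + 1))) ^ (-σ) ≤ (C₀ * P ^ (β * (m + 1))) ^ (-σ) := by
        rw [Real.rpow_neg (hgpos m).le, Real.rpow_neg (by positivity)]
        apply inv_anti₀ (Real.rpow_pos_of_pos (by positivity) _)
        exact Real.rpow_le_rpow (by positivity) (hg m).1 hσ0.le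
      calc P ^ ((m + 1) * n) * D * (g (P ^ (m + 1))) ^ (-σ)
          ≤ P ^ ((m + 1) * n) * D * (C₀ * P ^ (β * (m + 1))) ^ (-σ) := by
            apply mul_le_mul_of_nonneg_left hxg (by positivity)
        _ = D * C₀ ^ (-σ) * r ^ (m + 1) := by
            have hmerge : P ^ ((((m + 1) * n : ℕ)) : ℝ) * P ^ (β * ((m : ℝ) + 1) * -σ)
                = P ^ (((n : ℝ) - β * σ) * (((m + 1 : ℕ)) : ℝ)) := by
              rw [← Real.rpow_add hp0]; congr 1; push_cast; ring
            rw [Real.mul_rpow hC₀.le (Real.rpow_pos_of_pos hp0 _).le,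
              ← Real.rpow_natCast P ((m + 1) * n), ← Real.rpow_mul hp0.le,
              ← Real.rpow_natCast r (m + 1), hr, ← Real.rpow_mul hp0.le,
              ← hmerge]
            ring
      -- done
    have hterm_lo : ∀ m : ℕ, D * C₁ ^ (-σ) * r ^ (m + 1)
        ≤ P ^ ((m + 1) * n) * D * (g (P ^ (m + 1))) ^ (-σ) := by
      intro m
      have hxg : (C₁ * P ^ (β * (m + 1))) ^ (-σ) ≤ (g (P ^ (m + 1))) ^ (-σ) := by
        rw [Real.rpow_neg (hgpos m).le, Real.rpow_neg (by positivity)]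
        apply inv_anti₀ (Real.rpow_pos_of_pos (hgpos m) _)
        exact Real.rpow_le_rpow (hgpos m).le (hg m).2 hσ0.le
      calc D * C₁ ^ (-σ) * r ^ (m + 1)
          = P ^ ((m + 1) * n) * D * (C₁ * P ^ (β * (m + 1))) ^ (-σ) := by
            have hmerge : P ^ ((((m + 1) * n : ℕ)) : ℝ) * P ^ (β * ((m : ℝ) + 1) * -σ)
                = P ^ (((n : ℝ) - β * σ) * (((m + 1 : ℕ)) : ℝ)) := by
              rw [← Real.rpow_add hp0]; congr 1; push_cast; ring
            rw [Real.mul_rpow hC₁.le (Real.rpow_pos_of_pos hp0 _).le,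
              ← Real.rpow_natCast P ((m + 1) * n), ← Real.rpow_mul hp0.le,
              ← Real.rpow_natCast r (m + 1), hr, ← Real.rpow_mul hp0.le,
              ← hmerge]
            ring
        _ ≤ P ^ ((m + 1) * n) * D * (g (P ^ (m + 1))) ^ (-σ) := by
            apply mul_le_mul_of_nonneg_left hxg (by positivity)
    -- summability
    have hgeo : Summable (fun m : ℕ => r ^ (m + 1)) := by
      apply Summable.comp_injective (summable_geometric_of_lt_one hr0.le hr1)
      exact fun a b h => by omega
    have hgeo' : ∀ K : ℝ, Summable (fun m : ℕ => K * r ^ (m + 1)) :=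
      fun K => hgeo.mul_left K
    have hsum : Summable (fun m : ℕ => P ^ ((m + 1) * n) * D * (g (P ^ (m + 1))) ^ (-σ)) := by
      apply Summable.of_nonneg_of_le (fun m => by have := hgpos m; positivity) hterm_up (hgeo' _)
    have hgeosum : ∑' m : ℕ, r ^ (m + 1) = r * (1 - r)⁻¹ := by
      have : (fun m : ℕ => r ^ (m + 1)) = fun m : ℕ => r * r ^ m := by
        funext m; ring
      rw [this, tsum_mul_left, tsum_geometric_of_lt_one hr0.le hr1]
    have h1r : 0 < 1 - r := by linarith
    constructor
    · -- lower bound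
      have hS : D * C₁ ^ (-σ) * (r * (1 - r)⁻¹)
          ≤ ∑' m : ℕ, P ^ ((m + 1) * n) * D * (g (P ^ (m + 1))) ^ (-σ) := by
        calc D * C₁ ^ (-σ) * (r * (1 - r)⁻¹)
            = ∑' m : ℕ, D * C₁ ^ (-σ) * r ^ (m + 1) := by
              rw [tsum_mul_left, hgeosum]
          _ ≤ _ := Summable.tsum_le_tsum hterm_lo (hgeo' _) hsum
      have := mul_le_mul_of_nonneg_left hS h1r.le
      have heq : (1 - r) * (D * C₁ ^ (-σ) * (r * (1 - r)⁻¹)) = D * C₁ ^ (-σ) * r := by field_simp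
      rw [heq] at this
      refine le_trans ?_ this
      -- c ≤ D * C₁^{-σ} * r
      have hK : (max C₁ 1) ^ (-e) ≤ C₁ ^ (-σ) := by
        calc (max C₁ 1) ^ (-e) ≤ (max C₁ 1) ^ (-σ) := by
              apply Real.rpow_le_rpow_of_exponent_le (le_max_right _ _)
              simp only [neg_le_neg_iff]
              exact hσu
          _ ≤ C₁ ^ (-σ) := by
              rw [Real.rpow_neg (by positivity), Real.rpow_neg hC₁.le]
              apply inv_anti₀ (Real.rpow_pos_of_pos hC₁ _)
              exact Real.rpow_le_rpow hC₁.le (le_max_left _ _) hσ0.le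
      calc c = (max C₁ 1) ^ (-e) * D * P ^ (-β) := hc
        _ ≤ C₁ ^ (-σ) * D * r := by
            apply mul_le_mul (mul_le_mul_of_nonneg_right hK hD0.le) hrlow
              (by positivity) (by positivity)
        _ = D * C₁ ^ (-σ) * r := by ring
    · -- upper bound
      have hS : (∑' m : ℕ, P ^ ((m + 1) * n) * D * (g (P ^ (m + 1))) ^ (-σ))
          ≤ D * C₀ ^ (-σ) * (r * (1 - r)⁻¹) := by
        calc (∑' m : ℕ, P ^ ((m + 1) * n) * D * (g (P ^ (m + 1))) ^ (-σ))
            ≤ ∑' m : ℕ, D * C₀ ^ (-σ) * r ^ (m + 1) :=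
              Summable.tsum_le_tsum hterm_up hsum (hgeo' _)
          _ = D * C₀ ^ (-σ) * (r * (1 - r)⁻¹) := by rw [tsum_mul_left, hgeosum]
      have := mul_le_mul_of_nonneg_left hS h1r.le
      have heq : (1 - r) * (D * C₀ ^ (-σ) * (r * (1 - r)⁻¹)) = D * C₀ ^ (-σ) * r := by field_simp
      rw [heq] at this
      refine le_trans this ?_
      have hK : C₀ ^ (-σ) ≤ (min C₀ 1) ^ (-e) := by
        have hm0 : 0 < min C₀ 1 := lt_min hC₀ one_pos
        calc C₀ ^ (-σ) ≤ (min C₀ 1) ^ (-σ) := by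
              rw [Real.rpow_neg hC₀.le, Real.rpow_neg hm0.le]
              apply inv_anti₀ (Real.rpow_pos_of_pos hm0 _)
              exact Real.rpow_le_rpow hm0.le (min_le_left _ _) hσ0.le
          _ ≤ (min C₀ 1) ^ (-e) := by
              apply Real.rpow_le_rpow_of_exponent_ge hm0 (min_le_right _ _)
              simp only [neg_le_neg_iff]
              exact hσu
      calc D * C₀ ^ (-σ) * r ≤ D * C₀ ^ (-σ) * 1 := by
            apply mul_le_mul_of_nonneg_left hr1.le (by positivity)
        _ ≤ (min C₀ 1) ^ (-e) * D := by
            rw [mul_one, mul_comm]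
            exact mul_le_mul_of_nonneg_right hK hD0.le
        _ = Cc := hCc.symm
  refine ⟨c, Cc, hc0, ?_, fun σ h1 h2 => key σ h1 h2⟩
  have := key ((n:ℝ)/β + 1) (by linarith) (le_refl _)
  exact le_trans this.1 this.2
end

section
/- For every γ ∈ ℤ, every representative b ∈ ℚ_p^n of a coset of (ℚ_p/ℤ_p)^n, and every k ∈ {0,…,p−1}^n with k ≠ 0, the function ω_{γbk} is locally constant with compact support, satisfies ∫_{ℚ_p^n} ω_{γbk}(x) dⁿx = 0, and is an eigenfunction of A_β: (A_β ω_{γbk})(x) = A(p^{1−γ}) ω_{γbk}(x) for all x ∈ ℚ_p^n. -/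
open MeasureTheory Filter Topology Metric

namespace PadicHeat

variable {p : ℕ} [Fact p.Prime] {n : ℕ}

/-- The pairing `ξ·x = Σ_j ξ_j x_j` on `ℚ_p^n`. -/
noncomputable def dotQ (ξ x : Fin n → ℚ_[p]) : ℚ_[p] := ∑ j, ξ j * x j

/-- The heat kernel `K(x,t) = ∫_{ℚ_p^n∖ℤ_p^n} ψ(−x·ξ) e^{−tA(ξ)} dⁿξ`. -/
noncomputable def heatK (μ : Measure (Fin n → ℚ_[p])) (ψ : ℚ_[p] → ℂ)
    (A : (Fin n → ℚ_[p]) → ℝ) (t : ℝ) (x : Fin n → ℚ_[p]) : ℂ :=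
  ∫ ξ in {ξ : Fin n → ℚ_[p] | 1 < ‖ξ‖}, ψ (-dotQ x ξ) * (Real.exp (-(t * A ξ)) : ℂ) ∂μ

open Classical in
/-- The semigroup `T(t)`: the identity for `t = 0` and convolution with `K(·,t)` for `t ≠ 0`. -/
noncomputable def heatT (μ : Measure (Fin n → ℚ_[p])) (ψ : ℚ_[p] → ℂ)
    (A : (Fin n → ℚ_[p]) → ℝ) (t : ℝ) (f : (Fin n → ℚ_[p]) → ℂ)
    (x : Fin n → ℚ_[p]) : ℂ :=
  if t = 0 then f x else ∫ y, heatK μ ψ A t y * f (x - y) ∂μ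

/-- The `p`-adic Fourier transform `f̂(ξ) = ∫ ψ(ξ·x) f(x) dⁿx`. -/
noncomputable def fourierQ (μ : Measure (Fin n → ℚ_[p])) (ψ : ℚ_[p] → ℂ)
    (f : (Fin n → ℚ_[p]) → ℂ) (ξ : Fin n → ℚ_[p]) : ℂ :=
  ∫ x, ψ (dotQ ξ x) * f x ∂μ

/-- The pseudodifferential operator `A_β`, `(A_β f)(x) = ∫ ψ(−ξ·x) A(ξ) f̂(ξ) dⁿξ`. -/
noncomputable def opA (μ : Measure (Fin n → ℚ_[p])) (ψ : ℚ_[p] → ℂ)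
    (A : (Fin n → ℚ_[p]) → ℝ) (f : (Fin n → ℚ_[p]) → ℂ) (x : Fin n → ℚ_[p]) : ℂ :=
  ∫ ξ, ψ (-dotQ ξ x) * (A ξ : ℂ) * fourierQ μ ψ f ξ ∂μ

/-- Membership in the Lizorkin space `𝓛₀(ℤ_p^n)`: locally constant, supported in the unit
ball, with zero mean. -/
def MemL0 (μ : Measure (Fin n → ℚ_[p])) (f : (Fin n → ℚ_[p]) → ℂ) : Prop :=
  IsLocallyConstant f ∧ (∀ x : Fin n → ℚ_[p], 1 < ‖x‖ → f x = 0) ∧ (∫ x, f x ∂μ) = 0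

/-- Membership in `L²₀(ℤ_p^n)`: square integrable, vanishing (a.e.) outside the unit ball,
with zero mean. -/
def MemL20 (μ : Measure (Fin n → ℚ_[p])) (f : (Fin n → ℚ_[p]) → ℂ) : Prop :=
  MemLp f 2 μ ∧ (∀ᵐ x ∂μ, 1 < ‖x‖ → f x = 0) ∧ (∫ x, f x ∂μ) = 0

/-- The wavelet `ω_{γbk}(x) = p^{−nγ/2} ψ(p^{−1} k·(p^γ x − b)) Ω(‖p^γ x − b‖_p)`. -/
noncomputable def omegaFn (ψ : ℚ_[p] → ℂ) (γ : ℤ) (b : Fin n → ℚ_[p]) (k : Fin n → ℕ)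
    (x : Fin n → ℚ_[p]) : ℂ :=
  ((p : ℝ) ^ (-((n : ℝ) * (γ : ℝ)) / 2) : ℝ) *
    ψ ((p : ℚ_[p])⁻¹ * ∑ j, (k j : ℚ_[p]) * ((p : ℚ_[p]) ^ γ * x j - b j)) *
    (if ‖(fun j => (p : ℚ_[p]) ^ γ * x j - b j : Fin n → ℚ_[p])‖ ≤ 1 then 1 else 0)

end PadicHeat

open PadicHeat

/-!
Up to the constant `p^{-nγ/2}`, `ω_{γbk}` is the wave packet `x ↦ ψ(u·(x - x₀)) 1_{B(x₀, p^γ)}(x)`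
with `u = p^{γ-1} k` and `x₀ = p^{-γ} b`; since `k ≢ 0 mod p`, `‖u‖ = p^{1-γ}`.

The integral of `x ↦ ψ(w·x)` over a ball `B(x₀, p^γ)` is `ψ(w·x₀) μ(B_{p^γ})` when `‖w‖ ≤ p^{-γ}`
(the character is constant on the ball) and `0` otherwise (translating by some `t` in the ball
multiplies the integral by `ψ(w·t) ≠ 1`). Hence the Fourier transform of the wave packet is
`μ(B_{p^γ}) ψ(ξ·x₀)` on the ball `B(-u, p^{-γ})` and vanishes elsewhere. By the ultrametric
inequality every `ξ` in that ball has `‖ξ‖ = ‖u‖`, so the radial symbol acts there as the scalar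
`A(p^{1-γ})`, and the same integral formula inverts the transform, the constant
`μ(B_{p^γ}) μ(B_{p^{-γ}}) = 1` coming from the scaling of Haar measure. The mean of the wave packet
is its Fourier transform at `ξ = 0 ∉ B(-u, p^{-γ})`, hence `0`.
-/

namespace PadicHeat

section Ultrametric

lemma norm_dotProduct_le {ι R : Type*} [Fintype ι] [NormedRing R] [IsUltrametricDist R]
    (v w : ι → R) : ‖v ⬝ᵥ w‖ ≤ ‖v‖ * ‖w‖ :=
  IsUltrametricDist.norm_sum_le_of_forall_le_of_nonneg (by positivity) fun i _ =>
    (norm_mul_le _ _).trans (mul_le_mul (norm_le_pi_norm v i) (norm_le_pi_norm w i)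
      (norm_nonneg _) (norm_nonneg _))

lemma norm_eq_of_norm_sub_lt {E : Type*} [SeminormedAddCommGroup E] [IsUltrametricDist E]
    {x y : E} (h : ‖x - y‖ < ‖y‖) : ‖x‖ = ‖y‖ := by
  have := IsUltrametricDist.norm_add_eq_max_of_norm_ne_norm h.ne
  rwa [sub_add_cancel, max_eq_right h.le] at this

lemma mem_closedBall_add_iff {E : Type*} [SeminormedAddCommGroup E] [IsUltrametricDist E]
    {x t c : E} {r : ℝ} (ht : ‖t‖ ≤ r) : x + t ∈ closedBall c r ↔ x ∈ closedBall c r := by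
  have hd : dist (x + t) x ≤ r := by simpa using ht
  simp only [mem_closedBall]
  constructor
  · intro h
    exact (IsUltrametricDist.dist_triangle_max x (x + t) c).trans
      (max_le (by rwa [dist_comm]) h)
  · exact fun h => (IsUltrametricDist.dist_triangle_max (x + t) x c).trans (max_le hd h)

end Ultrametric

section HaarMeasure

open scoped Pointwise

variable {𝕜 E : Type*} [NormedField 𝕜] [NormedAddCommGroup E] [NormedSpace 𝕜 E]
  [MeasurableSpace E] [BorelSpace E] [LocallyCompactSpace E]

lemma measureReal_closedBall_norm_mul_inv (μ : Measure E) [μ.IsAddHaarMeasure] [μ.Regular]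
    (hμ : μ (closedBall 0 1) = 1) {c : 𝕜} (hc : c ≠ 0) :
    μ.real (closedBall 0 ‖c‖) * μ.real (closedBall 0 ‖c‖⁻¹) = 1 := by
  set c' : 𝕜ˣ := Units.mk0 c hc
  have hscale : ∀ r, μ (closedBall 0 (‖c‖ * r)) = distribHaarChar E c' * μ (closedBall 0 r) := by
    intro r
    rw [distribHaarChar_mul]
    show _ = μ (c • closedBall (0 : E) r)
    rw [smul_closedBall' hc, smul_zero]
  have h1 := hscale 1
  have h2 := hscale ‖c‖⁻¹
  rw [mul_one, hμ, mul_one] at h1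
  rw [mul_inv_cancel₀ (norm_ne_zero_iff.2 hc), hμ] at h2
  rw [measureReal_def, measureReal_def, ← ENNReal.toReal_mul, h1, ← h2, ENNReal.toReal_one]

lemma integral_eq_zero_of_map_add_right_eq_mul {G : Type*} [MeasurableSpace G] [AddGroup G]
    [MeasurableAdd G] (μ : Measure G) [μ.IsAddRightInvariant] {f : G → ℂ} {t : G} {c : ℂ}
    (hc : c ≠ 1) (hf : ∀ x, f (x + t) = c * f x) : ∫ x, f x ∂μ = 0 := by
  have h := integral_add_right_eq_self (μ := μ) f t
  simp_rw [hf, integral_const_mul] at h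
  have : (c - 1) * ∫ x, f x ∂μ = 0 := by rw [sub_mul, h, one_mul, sub_self]
  exact (mul_eq_zero.1 this).resolve_left (sub_ne_zero.2 hc)

end HaarMeasure

lemma norm_natCast_eq_one_of_pos_of_lt {p : ℕ} [hp : Fact p.Prime] {m : ℕ} (h0 : 0 < m)
    (hm : m < p) : ‖(m : ℚ_[p])‖ = 1 :=
  Padic.norm_natCast_eq_one_iff.2 <|
    (Nat.Prime.coprime_iff_not_dvd hp.out).2 (Nat.not_dvd_of_pos_of_lt h0 hm)

lemma norm_natCast_pi_eq_one {p : ℕ} [Fact p.Prime] {ι : Type*} [Fintype ι] {k : ι → ℕ}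
    (hk : ∀ i, k i < p) (hk0 : k ≠ 0) : ‖fun i => (k i : ℚ_[p])‖ = 1 := by
  obtain ⟨i, hi⟩ := Function.ne_iff.1 hk0
  refine le_antisymm
    ((pi_norm_le_iff_of_nonneg zero_le_one).2 fun j => IsUltrametricDist.norm_natCast_le_one _ _) ?_
  calc (1 : ℝ) = ‖(k i : ℚ_[p])‖ :=
        (norm_natCast_eq_one_of_pos_of_lt (Nat.pos_of_ne_zero hi) (hk i)).symm
    _ ≤ _ := norm_le_pi_norm (fun i => (k i : ℚ_[p])) i

section Character

variable {p : ℕ} [Fact p.Prime] (ψ : AddChar ℚ_[p] ℂ)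

lemma isLocallyConstant_addChar (hψtriv : ∀ a : ℚ_[p], ‖a‖ ≤ 1 → ψ a = 1) :
    IsLocallyConstant ψ := by
  refine (IsLocallyConstant.iff_exists_open _).2 fun a =>
    ⟨ball a 1, isOpen_ball, mem_ball_self one_pos, fun a' ha' => ?_⟩
  rw [← add_sub_cancel a a', AddChar.map_add_eq_mul, hψtriv _ (mem_ball_iff_norm.1 ha').le,
    mul_one]

lemma exists_norm_le_map_mul_ne_one (hψnontriv : ∃ a : ℚ_[p], ‖a‖ ≤ p ∧ ψ a ≠ 1) {γ : ℤ}
    {w : ℚ_[p]} (hw : (p : ℝ) ^ (-γ) < ‖w‖) : ∃ s : ℚ_[p], ‖s‖ ≤ (p : ℝ) ^ γ ∧ ψ (w * s) ≠ 1 := by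
  obtain ⟨a, ha, hψa⟩ := hψnontriv
  have hp : (0 : ℝ) < p := Nat.cast_pos.2 (Fact.out : p.Prime).pos
  have hw0 : 0 < ‖w‖ := (zpow_pos hp _).trans hw
  -- the norm of `w` lies in `p ^ ℤ`, so it exceeds `p ^ (-γ)` by at least a factor `p`
  have hw' : (p : ℝ) ^ (-γ + 1) ≤ ‖w‖ :=
    not_lt.1 fun h => hw.not_ge ((Padic.norm_le_pow_iff_norm_lt_pow_add_one w _).2 h)
  refine ⟨a / w, ?_, by rwa [mul_div_cancel₀ _ (norm_pos_iff.1 hw0)]⟩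
  rw [norm_div, div_le_iff₀ hw0]
  calc ‖a‖ ≤ p := ha
    _ = (p : ℝ) ^ γ * (p : ℝ) ^ (-γ + 1) := by rw [← zpow_add₀ hp.ne']; simp
    _ ≤ (p : ℝ) ^ γ * ‖w‖ := by gcongr

lemma exists_norm_le_map_dotProduct_ne_one (hψnontriv : ∃ a : ℚ_[p], ‖a‖ ≤ p ∧ ψ a ≠ 1)
    {ι : Type*} [Fintype ι] {γ : ℤ} {w : ι → ℚ_[p]} (hw : (p : ℝ) ^ (-γ) < ‖w‖) :
    ∃ t : ι → ℚ_[p], ‖t‖ ≤ (p : ℝ) ^ γ ∧ ψ (w ⬝ᵥ t) ≠ 1 := by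
  classical
  have hp : (0 : ℝ) < p := Nat.cast_pos.2 (Fact.out : p.Prime).pos
  obtain ⟨j, hj⟩ : ∃ j, (p : ℝ) ^ (-γ) < ‖w j‖ := by
    by_contra! h
    exact hw.not_ge ((pi_norm_le_iff_of_nonneg (zpow_pos hp _).le).2 h)
  obtain ⟨s, hs, hψs⟩ := exists_norm_le_map_mul_ne_one ψ hψnontriv hj
  refine ⟨Pi.single j s, (pi_norm_le_iff_of_nonneg (zpow_pos hp _).le).2 fun i => ?_,
    by rwa [dotProduct_single]⟩
  rcases eq_or_ne i j with rfl | hij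
  · simpa using hs
  · simpa [hij] using (zpow_pos hp _).le

end Character

section FourierTransform

variable {p n : ℕ} [Fact p.Prime] (μ : Measure (Fin n → ℚ_[p]))

lemma dotQ_eq_dotProduct (ξ x : Fin n → ℚ_[p]) : dotQ ξ x = ξ ⬝ᵥ x := rfl

lemma fourierQ_const_mul (ψ : ℚ_[p] → ℂ) (c : ℂ) (f : (Fin n → ℚ_[p]) → ℂ)
    (ξ : Fin n → ℚ_[p]) :
    fourierQ μ ψ (fun x => c * f x) ξ = c * fourierQ μ ψ f ξ := by
  simp_rw [fourierQ, mul_left_comm _ c, integral_const_mul]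

lemma opA_const_mul (ψ : ℚ_[p] → ℂ) (A : (Fin n → ℚ_[p]) → ℝ) (c : ℂ)
    (f : (Fin n → ℚ_[p]) → ℂ) (x : Fin n → ℚ_[p]) :
    opA μ ψ A (fun x => c * f x) x = c * opA μ ψ A f x := by
  simp_rw [opA, fourierQ_const_mul, mul_left_comm _ c, integral_const_mul]

variable [μ.IsAddHaarMeasure] (ψ : AddChar ℚ_[p] ℂ)

lemma measureReal_closedBall_zpow_mul_neg (hμ : μ (closedBall 0 1) = 1) (γ : ℤ) :
    μ.real (closedBall 0 ((p : ℝ) ^ γ)) * μ.real (closedBall 0 ((p : ℝ) ^ (-γ))) = 1 := by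
  have h := measureReal_closedBall_norm_mul_inv μ hμ
    (zpow_ne_zero (-γ) (Nat.cast_ne_zero.2 (Fact.out : p.Prime).ne_zero : (p : ℚ_[p]) ≠ 0))
  rwa [Padic.norm_p_zpow, neg_neg, ← zpow_neg] at h

theorem integral_addChar_mul_indicator_closedBall
    (hψtriv : ∀ a : ℚ_[p], ‖a‖ ≤ 1 → ψ a = 1) (hψnontriv : ∃ a : ℚ_[p], ‖a‖ ≤ p ∧ ψ a ≠ 1)
    (w x₀ : Fin n → ℚ_[p]) (γ : ℤ) :
    ∫ x, ψ (w ⬝ᵥ x) * (closedBall x₀ ((p : ℝ) ^ γ)).indicator 1 x ∂μ =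
      μ.real (closedBall 0 ((p : ℝ) ^ γ)) * ψ (w ⬝ᵥ x₀) *
        (closedBall 0 ((p : ℝ) ^ (-γ))).indicator 1 w := by
  have hp : (0 : ℝ) < p := Nat.cast_pos.2 (Fact.out : p.Prime).pos
  by_cases hw : ‖w‖ ≤ (p : ℝ) ^ (-γ)
  · have hconst : ∀ x, ψ (w ⬝ᵥ x) * (closedBall x₀ ((p : ℝ) ^ γ)).indicator 1 x =
        ψ (w ⬝ᵥ x₀) * (closedBall x₀ ((p : ℝ) ^ γ)).indicator 1 x := by
      intro x
      by_cases hx : x ∈ closedBall x₀ ((p : ℝ) ^ γ)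
      · have hsmall : ‖w ⬝ᵥ (x - x₀)‖ ≤ 1 := calc
          ‖w ⬝ᵥ (x - x₀)‖ ≤ ‖w‖ * ‖x - x₀‖ := norm_dotProduct_le w _
          _ ≤ (p : ℝ) ^ (-γ) * (p : ℝ) ^ γ := by
            gcongr
            exact mem_closedBall_iff_norm.1 hx
          _ = 1 := by rw [← zpow_add₀ hp.ne']; simp
        rw [← add_sub_cancel x₀ x, dotProduct_add, AddChar.map_add_eq_mul, hψtriv _ hsmall,
          mul_one, add_sub_cancel]
      · simp [hx]
    rw [integral_congr_ae (.of_forall hconst), integral_const_mul,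
      integral_indicator measurableSet_closedBall, Pi.one_def, setIntegral_const,
      Measure.addHaar_real_closedBall_center,
      Set.indicator_of_mem (mem_closedBall_zero_iff.2 hw)]
    simp only [Complex.real_smul]
    ring
  · obtain ⟨t, ht, hψt⟩ := exists_norm_le_map_dotProduct_ne_one ψ hψnontriv (not_le.1 hw)
    rw [Set.indicator_of_notMem (mt mem_closedBall_zero_iff.1 hw), mul_zero]
    refine integral_eq_zero_of_map_add_right_eq_mul μ (t := t) hψt fun x => ?_
    classical
    simp only [Set.indicator_apply, mem_closedBall_add_iff ht, Pi.one_apply, dotProduct_add,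
      AddChar.map_add_eq_mul]
    ring

end FourierTransform

section WavePacket

variable {p n : ℕ} [Fact p.Prime] (ψ : AddChar ℚ_[p] ℂ)

noncomputable def wavePacket (u x₀ : Fin n → ℚ_[p]) (r : ℝ) (x : Fin n → ℚ_[p]) : ℂ :=
  ψ (u ⬝ᵥ (x - x₀)) * (closedBall x₀ r).indicator 1 x

theorem isLocallyConstant_wavePacket (hψtriv : ∀ a : ℚ_[p], ‖a‖ ≤ 1 → ψ a = 1)
    (u x₀ : Fin n → ℚ_[p]) {r : ℝ} (hr : r ≠ 0) : IsLocallyConstant (wavePacket ψ u x₀ r) := by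
  have hphase : IsLocallyConstant fun x => ψ (u ⬝ᵥ (x - x₀)) :=
    (isLocallyConstant_addChar ψ hψtriv).comp_continuous (by fun_prop)
  have hball : IsLocallyConstant ((closedBall x₀ r).indicator (1 : (Fin n → ℚ_[p]) → ℂ)) := by
    rw [← LocallyConstant.coe_charFn ℂ (IsUltrametricDist.isClopen_closedBall x₀ hr)]
    exact LocallyConstant.isLocallyConstant _
  exact hphase.mul hball

theorem hasCompactSupport_wavePacket (u x₀ : Fin n → ℚ_[p]) (r : ℝ) :
    HasCompactSupport (wavePacket ψ u x₀ r) :=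
  HasCompactSupport.intro (isCompact_closedBall x₀ r) fun x hx => by simp [wavePacket, hx]

lemma omegaFn_eq_mul_wavePacket (γ : ℤ) (b : Fin n → ℚ_[p]) (k : Fin n → ℕ) :
    omegaFn ψ γ b k = fun x => (((p : ℝ) ^ (-((n : ℝ) * (γ : ℝ)) / 2) : ℝ) : ℂ) *
      wavePacket ψ ((p : ℚ_[p]) ^ (γ - 1) • fun j => (k j : ℚ_[p])) ((p : ℚ_[p]) ^ (-γ) • b)
        ((p : ℝ) ^ γ) x := by
  have hp : (p : ℚ_[p]) ≠ 0 := Nat.cast_ne_zero.2 (Fact.out : p.Prime).ne_zero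
  funext x
  have hvec : (fun j => (p : ℚ_[p]) ^ γ * x j - b j) =
      (p : ℚ_[p]) ^ γ • (x - (p : ℚ_[p]) ^ (-γ) • b) := by
    funext j
    simp [mul_sub, ← mul_assoc, mul_inv_cancel₀ (zpow_ne_zero γ hp)]
  have hphase : (p : ℚ_[p])⁻¹ * ∑ j, (k j : ℚ_[p]) * ((p : ℚ_[p]) ^ γ * x j - b j) =
      ((p : ℚ_[p]) ^ (γ - 1) • fun j => (k j : ℚ_[p])) ⬝ᵥ (x - (p : ℚ_[p]) ^ (-γ) • b) := by
    change _ * ((fun j => (k j : ℚ_[p])) ⬝ᵥ (fun j => (p : ℚ_[p]) ^ γ * x j - b j)) = _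
    rw [hvec, dotProduct_smul, smul_dotProduct, smul_eq_mul, smul_eq_mul, ← mul_assoc,
      zpow_sub_one₀ hp, mul_comm (_ ^ γ)]
  have hball : ‖(fun j => (p : ℚ_[p]) ^ γ * x j - b j : Fin n → ℚ_[p])‖ ≤ 1 ↔
      x ∈ closedBall ((p : ℚ_[p]) ^ (-γ) • b) ((p : ℝ) ^ γ) := by
    rw [hvec, norm_smul, Padic.norm_p_zpow, mem_closedBall_iff_norm, zpow_neg,
      inv_mul_le_iff₀ (zpow_pos (Nat.cast_pos.2 (Fact.out : p.Prime).pos) γ), mul_one]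
  classical
  simp only [omegaFn, wavePacket, hphase, hball, Set.indicator_apply, Pi.one_apply]
  ring

variable (μ : Measure (Fin n → ℚ_[p])) [μ.IsAddHaarMeasure]

theorem fourierQ_wavePacket (hψtriv : ∀ a : ℚ_[p], ‖a‖ ≤ 1 → ψ a = 1)
    (hψnontriv : ∃ a : ℚ_[p], ‖a‖ ≤ p ∧ ψ a ≠ 1) (u x₀ : Fin n → ℚ_[p]) (γ : ℤ)
    (ξ : Fin n → ℚ_[p]) :
    fourierQ μ ψ (wavePacket ψ u x₀ ((p : ℝ) ^ γ)) ξ =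
      μ.real (closedBall 0 ((p : ℝ) ^ γ)) * ψ (ξ ⬝ᵥ x₀) *
        (closedBall (-u) ((p : ℝ) ^ (-γ))).indicator 1 ξ := by
  have hψu : ψ (-(u ⬝ᵥ x₀)) * ψ (u ⬝ᵥ x₀) = 1 := by
    rw [← AddChar.map_add_eq_mul, neg_add_cancel, AddChar.map_zero_eq_one]
  have hshift : (closedBall 0 ((p : ℝ) ^ (-γ))).indicator (1 : (Fin n → ℚ_[p]) → ℂ) (ξ + u) =
      (closedBall (-u) ((p : ℝ) ^ (-γ))).indicator 1 ξ := by
    classical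
    simp only [Set.indicator_apply, mem_closedBall_iff_norm, sub_zero, sub_neg_eq_add,
      Pi.one_apply]
  have hintegrand : ∀ x, ψ (dotQ ξ x) * wavePacket ψ u x₀ ((p : ℝ) ^ γ) x =
      ψ (-(u ⬝ᵥ x₀)) * (ψ ((ξ + u) ⬝ᵥ x) * (closedBall x₀ ((p : ℝ) ^ γ)).indicator 1 x) := by
    intro x
    rw [wavePacket, dotQ_eq_dotProduct, add_dotProduct, dotProduct_sub, sub_eq_add_neg,
      AddChar.map_add_eq_mul, AddChar.map_add_eq_mul]
    ring
  rw [fourierQ, integral_congr_ae (.of_forall hintegrand), integral_const_mul,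
    integral_addChar_mul_indicator_closedBall μ ψ hψtriv hψnontriv, hshift, add_dotProduct,
    AddChar.map_add_eq_mul]
  linear_combination (μ.real (closedBall 0 ((p : ℝ) ^ γ)) * ψ (ξ ⬝ᵥ x₀) *
    (closedBall (-u) ((p : ℝ) ^ (-γ))).indicator 1 ξ) * hψu

theorem integral_wavePacket (hψtriv : ∀ a : ℚ_[p], ‖a‖ ≤ 1 → ψ a = 1)
    (hψnontriv : ∃ a : ℚ_[p], ‖a‖ ≤ p ∧ ψ a ≠ 1) {γ : ℤ} {u : Fin n → ℚ_[p]}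
    (hu : (p : ℝ) ^ (-γ) < ‖u‖) (x₀ : Fin n → ℚ_[p]) :
    ∫ x, wavePacket ψ u x₀ ((p : ℝ) ^ γ) x ∂μ = 0 := by
  have h := fourierQ_wavePacket ψ μ hψtriv hψnontriv u x₀ γ 0
  simp only [fourierQ, dotQ_eq_dotProduct, zero_dotProduct, AddChar.map_zero_eq_one,
    one_mul] at h
  rw [h, Set.indicator_of_notMem, mul_zero]
  simpa [mem_closedBall_iff_norm] using hu

theorem opA_wavePacket (hμ : μ (closedBall 0 1) = 1) (hψtriv : ∀ a : ℚ_[p], ‖a‖ ≤ 1 → ψ a = 1)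
    (hψnontriv : ∃ a : ℚ_[p], ‖a‖ ≤ p ∧ ψ a ≠ 1) {A : (Fin n → ℚ_[p]) → ℝ} {g : ℝ → ℝ}
    (hrad : ∀ ξ, A ξ = g ‖ξ‖) {γ : ℤ} {u : Fin n → ℚ_[p]} (hu : (p : ℝ) ^ (-γ) < ‖u‖)
    (x₀ x : Fin n → ℚ_[p]) :
    opA μ ψ A (wavePacket ψ u x₀ ((p : ℝ) ^ γ)) x = g ‖u‖ * wavePacket ψ u x₀ ((p : ℝ) ^ γ) x := by
  set M := μ.real (closedBall 0 ((p : ℝ) ^ γ))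
  have hsymbol : ∀ ξ ∈ closedBall (-u) ((p : ℝ) ^ (-γ)), A ξ = g ‖u‖ := fun ξ hξ => by
    rw [hrad, ← norm_neg u, norm_eq_of_norm_sub_lt]
    exact (mem_closedBall_iff_norm.1 hξ).trans_lt (by rwa [norm_neg])
  have hintegrand : ∀ ξ, ψ (-dotQ ξ x) * A ξ * fourierQ μ ψ (wavePacket ψ u x₀ ((p : ℝ) ^ γ)) ξ =
      (g ‖u‖ * M) * (ψ ((x₀ - x) ⬝ᵥ ξ) * (closedBall (-u) ((p : ℝ) ^ (-γ))).indicator 1 ξ) := by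
    intro ξ
    rw [fourierQ_wavePacket ψ μ hψtriv hψnontriv]
    by_cases hξ : ξ ∈ closedBall (-u) ((p : ℝ) ^ (-γ))
    · rw [hsymbol ξ hξ, dotQ_eq_dotProduct, sub_dotProduct, dotProduct_comm x₀, dotProduct_comm x,
        sub_eq_neg_add, AddChar.map_add_eq_mul]
      ring
    · rw [Set.indicator_of_notMem hξ, mul_zero, mul_zero, mul_zero, mul_zero]
  rw [opA, integral_congr_ae (.of_forall hintegrand), integral_const_mul,
    integral_addChar_mul_indicator_closedBall μ ψ hψtriv hψnontriv, neg_neg]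
  have hM : (M : ℂ) * μ.real (closedBall 0 ((p : ℝ) ^ (-γ))) = 1 := by
    exact_mod_cast measureReal_closedBall_zpow_mul_neg μ hμ γ
  have hphase : (x₀ - x) ⬝ᵥ -u = u ⬝ᵥ (x - x₀) := by
    rw [dotProduct_neg, dotProduct_comm, ← dotProduct_neg, neg_sub]
  have hball : (closedBall 0 ((p : ℝ) ^ γ)).indicator (1 : (Fin n → ℚ_[p]) → ℂ) (x₀ - x) =
      (closedBall x₀ ((p : ℝ) ^ γ)).indicator 1 x := by
    classical
    simp only [Set.indicator_apply, mem_closedBall_iff_norm, sub_zero, norm_sub_rev,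
      Pi.one_apply]
  rw [hphase, hball, wavePacket]
  linear_combination (g ‖u‖ * ψ (u ⬝ᵥ (x - x₀)) * (closedBall x₀ ((p : ℝ) ^ γ)).indicator 1 x) * hM

end WavePacket

end PadicHeat

open PadicHeat

theorem omega_is_eigenfunction_general {p n : ℕ} [Fact p.Prime]
    (μ : Measure (Fin n → ℚ_[p])) [μ.IsAddHaarMeasure]
    (hμ : μ (closedBall (0 : Fin n → ℚ_[p]) 1) = 1)
    (A : (Fin n → ℚ_[p]) → ℝ) (g : ℝ → ℝ)
    (hrad : ∀ ξ : Fin n → ℚ_[p], A ξ = g ‖ξ‖)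
    (ψ : ℚ_[p] → ℂ)
    (hψadd : ∀ a b : ℚ_[p], ψ (a + b) = ψ a * ψ b)
    (hψtriv : ∀ a : ℚ_[p], ‖a‖ ≤ 1 → ψ a = 1)
    (hψnontriv : ∃ a : ℚ_[p], ‖a‖ ≤ p ∧ ψ a ≠ 1)
    (γ : ℤ) (b : Fin n → ℚ_[p]) (k : Fin n → ℕ)
    (hk : ∀ i, k i < p) (hk0 : k ≠ 0) :
    IsLocallyConstant (omegaFn ψ γ b k) ∧
    HasCompactSupport (omegaFn ψ γ b k) ∧
    (∫ x, omegaFn ψ γ b k x ∂μ) = 0 ∧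
    ∀ x : Fin n → ℚ_[p],
      opA μ ψ A (omegaFn ψ γ b k) x = (g ((p : ℝ) ^ (1 - γ)) : ℂ) * omegaFn ψ γ b k x := by
  obtain ⟨χ, rfl⟩ : ∃ χ : AddChar ℚ_[p] ℂ, ⇑χ = ψ := ⟨⟨ψ, hψtriv 0 (by simp), hψadd⟩, rfl⟩
  set u : Fin n → ℚ_[p] := (p : ℚ_[p]) ^ (γ - 1) • fun j => (k j : ℚ_[p])
  have hu : ‖u‖ = (p : ℝ) ^ (1 - γ) := by
    rw [norm_smul, Padic.norm_p_zpow, norm_natCast_pi_eq_one hk hk0, mul_one, neg_sub]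
  have hu_gt : (p : ℝ) ^ (-γ) < ‖u‖ :=
    hu ▸ zpow_lt_zpow_right₀ (Nat.one_lt_cast.2 (Fact.out : p.Prime).one_lt) (by omega)
  rw [omegaFn_eq_mul_wavePacket]
  refine ⟨(isLocallyConstant_wavePacket χ hψtriv u _
    (zpow_pos (Nat.cast_pos.2 (Fact.out : p.Prime).pos) γ).ne').comp _,
    (hasCompactSupport_wavePacket χ u _ _).mul_left, ?_, fun x => ?_⟩
  · rw [integral_const_mul, integral_wavePacket χ μ hψtriv hψnontriv hu_gt, mul_zero]
  · rw [opA_const_mul, opA_wavePacket χ μ hμ hψtriv hψnontriv hrad hu_gt, hu]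
    ring

/-- For every `γ ∈ ℤ`, `b ∈ ℚ_p^n` and `k ∈ {0,…,p−1}^n`, `k ≠ 0`, the wavelet
`ω_{γbk}` is locally constant with compact support, has zero integral, and is an eigenfunction
of `A_β` with eigenvalue `A(p^{1−γ})`. -/
theorem omega_is_eigenfunction {p n : ℕ} [Fact p.Prime] (hn : 0 < n)
    (μ : Measure (Fin n → ℚ_[p])) [μ.IsAddHaarMeasure]
    (hμ : μ (closedBall (0 : Fin n → ℚ_[p]) 1) = 1)
    (β C₀ C₁ : ℝ) (hβ : 0 < β) (hC₀ : 0 < C₀) (hC₁ : 0 < C₁)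
    (A : (Fin n → ℚ_[p]) → ℝ) (g : ℝ → ℝ)
    (hrad : ∀ ξ : Fin n → ℚ_[p], A ξ = g ‖ξ‖)
    (hlow : ∀ ξ : Fin n → ℚ_[p], C₀ * ‖ξ‖ ^ β ≤ A ξ)
    (hupp : ∀ ξ : Fin n → ℚ_[p], A ξ ≤ C₁ * ‖ξ‖ ^ β)
    (ψ : ℚ_[p] → ℂ) (hψcont : Continuous ψ)
    (hψadd : ∀ a b : ℚ_[p], ψ (a + b) = ψ a * ψ b)
    (hψnorm : ∀ a : ℚ_[p], ‖ψ a‖ = 1)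
    (hψtriv : ∀ a : ℚ_[p], ‖a‖ ≤ 1 → ψ a = 1)
    (hψnontriv : ∃ a : ℚ_[p], ‖a‖ ≤ p ∧ ψ a ≠ 1)
    (γ : ℤ) (b : Fin n → ℚ_[p]) (k : Fin n → ℕ)
    (hk : ∀ i, k i < p) (hk0 : k ≠ 0) :
    IsLocallyConstant (omegaFn ψ γ b k) ∧
    HasCompactSupport (omegaFn ψ γ b k) ∧
    (∫ x, omegaFn ψ γ b k x ∂μ) = 0 ∧
    ∀ x : Fin n → ℚ_[p],
      opA μ ψ A (omegaFn ψ γ b k) x = (g ((p : ℝ) ^ (1 - γ)) : ℂ) * omegaFn ψ γ b k x :=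
  omega_is_eigenfunction_general μ hμ A g hrad ψ hψadd hψtriv hψnontriv γ b k hk hk0
end

section
/- For every t ≥ 0, T(t) is a well-defined bounded linear operator from L²₀(ℤ_p^n) to itself; in particular, for every f ∈ L²₀(ℤ_p^n) and t > 0, the convolution K(·,t) ∗ f belongs to L²(ℚ_p^n), vanishes outside ℤ_p^n, and satisfies ∫_{ℤ_p^n} (K(·,t) ∗ f)(x) dⁿx = 0. -/
open MeasureTheory Filter Topology Metric
open scoped ENNReal

open PadicHeat

open scoped Pointwise Convolution

/-!
For `t > 0` the kernel `K(·,t)` is bounded by `∫_{‖ξ‖>1} e^{-tA(ξ)} dⁿξ`, which is finite because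
`e^{-tA}` decays faster than every power of `‖ξ‖` while the Haar measure of the ball of radius
`p^m` grows only geometrically in `m`. For `‖x‖ > 1` pick `η` with `‖η‖ ≤ 1` and `x·η = -a`, where
`ψ(a) ≠ 1`: the substitution `ξ ↦ ξ + η` preserves `{‖ξ‖ > 1}`, the Haar measure and the radial
symbol, so `K(x,t) = ψ(a) K(x,t)` and `K(x,t) = 0`. By the ultrametric inequality, `K(·,t) ∗ f`
then vanishes outside `ℤ_p^n`; it is bounded by `‖K‖_∞ ‖f‖₁ ≤ ‖K‖_∞ ‖f‖₂` (as `ℤ_p^n` has measure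
one), and its mean is `∫ K · ∫ f = 0`.
-/

section Ultrametric

variable {E : Type*} [NormedAddCommGroup E] [IsUltrametricDist E]

lemma norm_add_eq_of_norm_le_of_lt {ξ η : E} {r : ℝ} (hη : ‖η‖ ≤ r) (hξ : r < ‖ξ‖) :
    ‖ξ + η‖ = ‖ξ‖ := by
  rw [IsUltrametricDist.norm_add_eq_max_of_norm_ne_norm (by linarith), max_eq_left (by linarith)]

variable [MeasurableSpace E] [BorelSpace E]

-- A preimage under the norm is a union of spheres, all open except `sphere 0 0 = {0}`.
lemma measurable_comp_norm {F : Type*} [MeasurableSpace F] (g : ℝ → F) :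
    Measurable fun ξ : E => g ‖ξ‖ := by
  intro s _
  have hsplit : (fun ξ : E => g ‖ξ‖) ⁻¹' s =
      (⋃ r ∈ g ⁻¹' s \ {0}, sphere (0 : E) r) ∪ norm ⁻¹' (g ⁻¹' s ∩ {0}) := by
    ext ξ
    by_cases h : ‖ξ‖ = 0 <;> simp [h]
  rw [hsplit]
  refine .union ?_ (measurable_norm ?_)
  · exact (isOpen_biUnion fun r hr => IsUltrametricDist.isOpen_sphere 0 hr.2).measurableSet
  · exact (Set.subsingleton_singleton.anti Set.inter_subset_right).measurableSet

variable {μ : Measure E} [μ.IsAddLeftInvariant] [μ.IsNegInvariant]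

lemma convolution_eq_zero_of_lt_norm {K f : E → ℂ} {r : ℝ} (hK : ∀ y, r < ‖y‖ → K y = 0)
    (hf : ∀ᵐ y ∂μ, r < ‖y‖ → f y = 0) {x : E} (hx : r < ‖x‖) :
    (K ⋆[ContinuousLinearMap.mul ℂ ℂ, μ] f) x = 0 := by
  refine integral_eq_zero_of_ae ?_
  filter_upwards [(Measure.measurePreserving_sub_left μ x).quasiMeasurePreserving.ae hf]
    with y hfy
  rcases lt_or_ge r ‖y‖ with hy | hy
  · simp [hK y hy]
  · have hxy : ‖x - y‖ = ‖x‖ := by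
      rw [sub_eq_add_neg]; exact norm_add_eq_of_norm_le_of_lt (by rwa [norm_neg]) hx
    simp [hfy (hxy ▸ hx)]

end Ultrametric

section IntegrableAtInfinity

variable {E : Type*} [NormedAddCommGroup E] [ProperSpace E] [MeasurableSpace E] [BorelSpace E]
  (μ : Measure E) [μ.IsAddHaarMeasure]

lemma measure_closedBall_norm_pow {𝕜 : Type*} [NontriviallyNormedField 𝕜] [NormedSpace 𝕜 E]
    (c : 𝕜ˣ) (m : ℕ) :
    μ (closedBall 0 (‖(c : 𝕜)‖ ^ m)) = distribHaarChar E c ^ m * μ (closedBall 0 1) := by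
  have hball : closedBall (0 : E) (‖(c : 𝕜)‖ ^ m) = (c ^ m) • closedBall 0 1 := by
    rw [Units.smul_def, smul_closedBall' (by simp), smul_zero, Units.val_pow_eq_pow_val,
      norm_pow, mul_one]
  rw [hball, ← distribHaarChar_mul, map_pow, ENNReal.coe_pow]

-- Cutting `{1 < ‖ξ‖}` into shells `‖c‖ ^ m ≤ ‖ξ‖ < ‖c‖ ^ (m + 1)` whose measures grow
-- geometrically, the integral is dominated by a geometric series once `‖c‖ ^ s` beats the growth.
lemma eventually_integrableOn_norm_rpow_neg (𝕜 : Type*) [NontriviallyNormedField 𝕜]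
    [NormedSpace 𝕜 E] :
    ∀ᶠ s : ℝ in atTop, IntegrableOn (fun ξ : E => ‖ξ‖ ^ (-s)) {ξ | 1 < ‖ξ‖} μ := by
  obtain ⟨c, hc⟩ := NormedField.exists_one_lt_norm 𝕜
  set u : 𝕜ˣ := Units.mk0 c (norm_pos_iff.1 (one_pos.trans hc))
  set r := ‖c‖
  set χ := distribHaarChar E u
  have hball : ∀ m : ℕ, μ (closedBall 0 (r ^ m)) = χ ^ m * μ (closedBall 0 1) :=
    measure_closedBall_norm_pow μ u
  filter_upwards [(tendsto_rpow_atTop_of_base_gt_one r hc).eventually_gt_atTop (χ : ℝ),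
    eventually_ge_atTop 0] with s hχs hs
  set q : ℝ≥0∞ := ENNReal.ofReal (r ^ (-s)) * χ with hq_def
  have hq : q < 1 := by
    rw [hq_def, ← ENNReal.ofReal_coe_nnreal, ← ENNReal.ofReal_mul (by positivity),
      ENNReal.ofReal_lt_one, Real.rpow_neg (by positivity), inv_mul_lt_iff₀ (by positivity),
      mul_one]
    exact hχs
  set D : ℕ → Set E := fun m => {ξ | r ^ m ≤ ‖ξ‖ ∧ ‖ξ‖ < r ^ (m + 1)}
  have hcover : {ξ : E | 1 < ‖ξ‖} ⊆ ⋃ m, D m := fun ξ hξ =>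
    Set.mem_iUnion.2 (exists_nat_pow_near (le_of_lt hξ) hc)
  have hshell : ∀ m, ∫⁻ ξ in D m, ENNReal.ofReal (‖ξ‖ ^ (-s)) ∂μ ≤
      χ * μ (closedBall 0 1) * q ^ m := by
    intro m
    calc ∫⁻ ξ in D m, ENNReal.ofReal (‖ξ‖ ^ (-s)) ∂μ
        ≤ ∫⁻ ξ in D m, ENNReal.ofReal (r ^ (-s)) ^ m ∂μ := by
          refine setLIntegral_mono measurable_const fun ξ hξ => ?_
          rw [← ENNReal.ofReal_pow (by positivity), ← Real.rpow_natCast, ← Real.rpow_mul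
            (by positivity), mul_comm, Real.rpow_mul (by positivity), Real.rpow_natCast]
          exact ENNReal.ofReal_le_ofReal <| Real.rpow_le_rpow_of_nonpos (by positivity) hξ.1
            (neg_nonpos.2 hs)
      _ = ENNReal.ofReal (r ^ (-s)) ^ m * μ (D m) := setLIntegral_const _ _
      _ ≤ ENNReal.ofReal (r ^ (-s)) ^ m * μ (closedBall 0 (r ^ (m + 1))) := by
          gcongr
          exact fun ξ hξ => mem_closedBall_zero_iff.2 hξ.2.le
      _ = χ * μ (closedBall 0 1) * q ^ m := by
          rw [hball, pow_succ, mul_pow]; ring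
  refine ⟨(measurable_norm.pow_const _).aestronglyMeasurable, ?_⟩
  rw [hasFiniteIntegral_iff_ofReal (ae_of_all _ fun ξ => by positivity)]
  calc ∫⁻ ξ in {ξ | 1 < ‖ξ‖}, ENNReal.ofReal (‖ξ‖ ^ (-s)) ∂μ
      ≤ ∑' m, ∫⁻ ξ in D m, ENNReal.ofReal (‖ξ‖ ^ (-s)) ∂μ :=
        (lintegral_mono_set hcover).trans (lintegral_iUnion_le _ _)
    _ ≤ ∑' m, χ * μ (closedBall 0 1) * q ^ m := ENNReal.tsum_le_tsum hshell
    _ < ⊤ := by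
        rw [ENNReal.tsum_mul_left, ENNReal.tsum_geometric]
        exact ENNReal.mul_lt_top (ENNReal.mul_lt_top ENNReal.coe_lt_top measure_closedBall_lt_top)
          (ENNReal.inv_lt_top.2 (tsub_pos_of_lt hq))

lemma exp_neg_mul_rpow_le {a x : ℝ} (ha : 0 < a) (hx : 0 < x) (β : ℝ) (k : ℕ) :
    Real.exp (-(a * x ^ β)) ≤ k.factorial / a ^ k * x ^ (-(β * k)) := by
  have hexp := Real.pow_div_factorial_le_exp (a * x ^ β) (by positivity) k
  calc Real.exp (-(a * x ^ β)) = (Real.exp (a * x ^ β))⁻¹ := Real.exp_neg _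
    _ ≤ ((a * x ^ β) ^ k / k.factorial)⁻¹ := inv_anti₀ (by positivity) hexp
    _ = k.factorial / a ^ k * x ^ (-(β * k)) := by
        rw [mul_pow, ← Real.rpow_mul_natCast hx.le, Real.rpow_neg hx.le]
        field_simp

lemma integrableOn_exp_neg_mul_of_le (𝕜 : Type*) [NontriviallyNormedField 𝕜] [NormedSpace 𝕜 E]
    {A : E → ℝ} (hA : Measurable A) {C₀ β t : ℝ} (hC₀ : 0 < C₀) (hβ : 0 < β) (ht : 0 < t)
    (hlow : ∀ ξ, C₀ * ‖ξ‖ ^ β ≤ A ξ) :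
    IntegrableOn (fun ξ => Real.exp (-(t * A ξ))) {ξ | 1 < ‖ξ‖} μ := by
  obtain ⟨k, hk⟩ := ((tendsto_natCast_atTop_atTop.const_mul_atTop hβ).eventually
    (eventually_integrableOn_norm_rpow_neg μ 𝕜)).exists
  refine (hk.const_mul (k.factorial / (t * C₀) ^ k)).mono'
    (hA.const_mul t).neg.exp.aestronglyMeasurable
    ((ae_restrict_iff' (measurableSet_lt measurable_const measurable_norm)).2
      (ae_of_all _ fun ξ hξ => ?_))
  rw [Real.norm_of_nonneg (Real.exp_pos _).le]
  calc Real.exp (-(t * A ξ)) ≤ Real.exp (-(t * C₀ * ‖ξ‖ ^ β)) := by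
        rw [mul_assoc]; gcongr; exact hlow ξ
    _ ≤ _ := exp_neg_mul_rpow_le (by positivity) (one_pos.trans hξ) β k

end IntegrableAtInfinity

section ConvolutionBounds

lemma MeasureTheory.MemLp.integrable_of_ae_notMem_eq_zero {α F : Type*} [MeasurableSpace α]
    [NormedAddCommGroup F] {μ : Measure α} {B : Set α} (hμB : μ B ≠ ∞) {f : α → F}
    (hf : MemLp f 2 μ) (hfB : ∀ᵐ x ∂μ, x ∉ B → f x = 0) : Integrable f μ :=
  have : IsFiniteMeasure (μ.restrict B) := isFiniteMeasure_restrict.2 hμB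
  IntegrableOn.integrable_of_ae_notMem_eq_zero ((hf.restrict B).integrable one_le_two) hfB

variable {E : Type*} [NormedAddCommGroup E] [MeasurableSpace E] [BorelSpace E]
  {μ : Measure E} [μ.IsAddLeftInvariant] [μ.IsNegInvariant]

lemma norm_convolution_le {K f : E → ℂ} {M : ℝ} (hKM : ∀ y, ‖K y‖ ≤ M) (hf : Integrable f μ)
    (x : E) : ‖(K ⋆[ContinuousLinearMap.mul ℂ ℂ, μ] f) x‖ ≤ M * ∫ y, ‖f y‖ ∂μ :=
  calc ‖∫ y, K y * f (x - y) ∂μ‖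
      ≤ ∫ y, ‖K y * f (x - y)‖ ∂μ := norm_integral_le_integral_norm _
    _ ≤ ∫ y, M * ‖f (x - y)‖ ∂μ :=
        integral_mono_of_nonneg (ae_of_all _ fun _ => norm_nonneg _)
          ((hf.comp_sub_left x).norm.const_mul M)
          (ae_of_all _ fun y => by dsimp only; rw [norm_mul]; gcongr; exact hKM y)
    _ = M * ∫ y, ‖f y‖ ∂μ := by
        rw [integral_const_mul, integral_sub_left_eq_self (fun y => ‖f y‖) μ x]

lemma eLpNorm_convolution_le {B : Set E} (hB : MeasurableSet B) (hμB : μ B = 1) {K f : E → ℂ}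
    {M : ℝ} (hKM : ∀ y, ‖K y‖ ≤ M) (hf : MemLp f 2 μ) (hfB : ∀ᵐ x ∂μ, x ∉ B → f x = 0)
    (hKfB : ∀ x ∉ B, (K ⋆[ContinuousLinearMap.mul ℂ ℂ, μ] f) x = 0) :
    eLpNorm (K ⋆[ContinuousLinearMap.mul ℂ ℂ, μ] f) 2 μ ≤ ENNReal.ofReal M * eLpNorm f 2 μ := by
  have : IsProbabilityMeasure (μ.restrict B) := ⟨by rw [Measure.restrict_apply_univ, hμB]⟩
  have hfind : f =ᵐ[μ] B.indicator f := by
    filter_upwards [hfB] with x hx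
    by_cases hxB : x ∈ B <;> simp [hxB, hx]
  have hfint : Integrable f μ := hf.integrable_of_ae_notMem_eq_zero (hμB ▸ ENNReal.one_ne_top) hfB
  have hL1 : ENNReal.ofReal (∫ y, ‖f y‖ ∂μ) ≤ eLpNorm f 2 μ :=
    calc ENNReal.ofReal (∫ y, ‖f y‖ ∂μ) = eLpNorm f 1 (μ.restrict B) := by
          rw [ofReal_integral_norm_eq_lintegral_enorm hfint, ← eLpNorm_one_eq_lintegral_enorm,
            eLpNorm_congr_ae hfind, eLpNorm_indicator_eq_eLpNorm_restrict hB]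
      _ ≤ eLpNorm f 2 (μ.restrict B) :=
          eLpNorm_le_eLpNorm_of_exponent_le one_le_two hf.1.restrict
      _ ≤ eLpNorm f 2 μ := eLpNorm_mono_measure _ Measure.restrict_le_self
  have hM : 0 ≤ M := (norm_nonneg _).trans (hKM 0)
  calc eLpNorm (K ⋆[ContinuousLinearMap.mul ℂ ℂ, μ] f) 2 μ
      = eLpNorm (K ⋆[ContinuousLinearMap.mul ℂ ℂ, μ] f) 2 (μ.restrict B) :=
        (eLpNorm_restrict_eq_of_support_subset fun x hx =>
          by_contra fun hxB => hx (hKfB x hxB)).symm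
    _ ≤ ENNReal.ofReal (M * ∫ y, ‖f y‖ ∂μ) := by
        simpa using eLpNorm_le_of_ae_bound (μ := μ.restrict B) (p := 2)
          (ae_of_all _ (norm_convolution_le hKM hfint))
    _ ≤ ENNReal.ofReal M * eLpNorm f 2 μ := by
        rw [ENNReal.ofReal_mul hM]; gcongr

end ConvolutionBounds

namespace PadicHeat

variable {p : ℕ} [Fact p.Prime] {n : ℕ}

lemma dotQ_add_right (y ξ η : Fin n → ℚ_[p]) : dotQ y (ξ + η) = dotQ y ξ + dotQ y η := by
  simp only [dotQ, Pi.add_apply, mul_add, Finset.sum_add_distrib]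

lemma _root_.Continuous.dotQ {X : Type*} [TopologicalSpace X] {f g : X → Fin n → ℚ_[p]}
    (hf : Continuous f) (hg : Continuous g) : Continuous fun x => dotQ (f x) (g x) := by
  unfold PadicHeat.dotQ; fun_prop

lemma exists_dotQ_eq {y : Fin n → ℚ_[p]} (hy : 1 < ‖y‖) {a : ℚ_[p]} (ha : ‖a‖ ≤ p) :
    ∃ η : Fin n → ℚ_[p], ‖η‖ ≤ 1 ∧ dotQ y η = a := by
  obtain ⟨j, hj⟩ : ∃ j, 1 < ‖y j‖ := by
    by_contra! h
    exact hy.not_ge ((pi_norm_le_iff_of_nonneg zero_le_one).2 h)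
  -- the norm of `ℚ_[p]` takes no value strictly between `1` and `p`
  have hpj : (p : ℝ) ≤ ‖y j‖ := by
    by_contra! h
    have := (Padic.norm_le_pow_iff_norm_lt_pow_add_one (y j) 0).2 (by simpa using h)
    rw [zpow_zero] at this
    linarith
  have hyj : y j ≠ 0 := norm_pos_iff.1 (one_pos.trans hj)
  refine ⟨Pi.single j (a / y j), ?_, ?_⟩
  · rw [Pi.norm_single, norm_div, div_le_one (one_pos.trans hj)]
    exact ha.trans hpj
  · simp [dotQ, Pi.single_apply, mul_div_cancel₀ _ hyj]

section HeatKernel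

variable (μ : Measure (Fin n → ℚ_[p])) (ψ : ℚ_[p] → ℂ) (A : (Fin n → ℚ_[p]) → ℝ) (t : ℝ)

lemma norm_heatK_integrand (hψ : ∀ a, ‖ψ a‖ = 1) (y ξ : Fin n → ℚ_[p]) :
    ‖ψ (-dotQ y ξ) * (Real.exp (-(t * A ξ)) : ℂ)‖ = Real.exp (-(t * A ξ)) := by
  rw [norm_mul, hψ, one_mul, Complex.norm_real, Real.norm_of_nonneg (Real.exp_pos _).le]

lemma norm_heatK_le (hψ : ∀ a, ‖ψ a‖ = 1) (y : Fin n → ℚ_[p]) :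
    ‖heatK μ ψ A t y‖ ≤ ∫ ξ in {ξ | 1 < ‖ξ‖}, Real.exp (-(t * A ξ)) ∂μ :=
  (norm_integral_le_integral_norm _).trans_eq <|
    integral_congr_ae <| ae_of_all _ (norm_heatK_integrand ψ A t hψ y)

lemma continuous_heatK (hψc : Continuous ψ) (hψ : ∀ a, ‖ψ a‖ = 1) (hA : Measurable A)
    (hint : IntegrableOn (fun ξ => Real.exp (-(t * A ξ))) {ξ | 1 < ‖ξ‖} μ) :
    Continuous (heatK μ ψ A t) :=
  continuous_of_dominated
    (fun _ => (hψc.comp (continuous_const.dotQ continuous_id).neg).aestronglyMeasurable.mul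
      (Complex.measurable_ofReal.comp (hA.const_mul t).neg.exp).aestronglyMeasurable)
    (fun y => ae_of_all _ fun ξ => (norm_heatK_integrand ψ A t hψ y ξ).le) hint
    (ae_of_all _ fun _ => (hψc.comp (continuous_id.dotQ continuous_const).neg).mul
      continuous_const)

lemma heatK_eq_mul_heatK [μ.IsAddRightInvariant] (hψadd : ∀ a b, ψ (a + b) = ψ a * ψ b)
    (g : ℝ → ℝ) (hrad : ∀ ξ, A ξ = g ‖ξ‖) {η : Fin n → ℚ_[p]} (hη : ‖η‖ ≤ 1)
    (y : Fin n → ℚ_[p]) : heatK μ ψ A t y = ψ (-dotQ y η) * heatK μ ψ A t y := by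
  set S : Set (Fin n → ℚ_[p]) := {ξ | 1 < ‖ξ‖}
  set G := fun ξ => ψ (-dotQ y ξ) * (Real.exp (-(t * A ξ)) : ℂ)
  have hS : MeasurableSet S := measurableSet_lt measurable_const measurable_norm
  have hshift : ∀ ξ, S.indicator G (ξ + η) = ψ (-dotQ y η) * S.indicator G ξ := by
    intro ξ
    by_cases hξ : 1 < ‖ξ‖
    · have hξη : ‖ξ + η‖ = ‖ξ‖ := norm_add_eq_of_norm_le_of_lt hη hξ
      rw [Set.indicator_of_mem (s := S) (by rwa [← hξη] at hξ), Set.indicator_of_mem (s := S) hξ]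
      simp only [G, hrad (ξ + η), hξη, ← hrad ξ, dotQ_add_right, neg_add, hψadd]
      ring
    · have hξη : ¬ 1 < ‖ξ + η‖ := fun h => by
        have := norm_add_eq_of_norm_le_of_lt (by rwa [norm_neg]) h (η := -η)
        rw [add_neg_cancel_right] at this
        exact hξ (this ▸ h)
      rw [Set.indicator_of_notMem (s := S) hξη, Set.indicator_of_notMem (s := S) hξ, mul_zero]
  calc heatK μ ψ A t y = ∫ ξ, S.indicator G (ξ + η) ∂μ := by
        rw [integral_add_right_eq_self, integral_indicator hS]; rfl
    _ = ψ (-dotQ y η) * heatK μ ψ A t y := by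
        simp_rw [hshift, integral_const_mul, integral_indicator hS]; rfl

lemma heatK_eq_zero_of_one_lt_norm [μ.IsAddRightInvariant]
    (hψadd : ∀ a b, ψ (a + b) = ψ a * ψ b) (hψnontriv : ∃ a : ℚ_[p], ‖a‖ ≤ p ∧ ψ a ≠ 1)
    (g : ℝ → ℝ) (hrad : ∀ ξ, A ξ = g ‖ξ‖) {y : Fin n → ℚ_[p]} (hy : 1 < ‖y‖) :
    heatK μ ψ A t y = 0 := by
  obtain ⟨a, ha, hψa⟩ := hψnontriv
  obtain ⟨η, hη, hyη⟩ := exists_dotQ_eq hy (a := -a) (by rwa [norm_neg])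
  have h := (heatK_eq_mul_heatK μ ψ A t hψadd g hrad hη y).symm
  rw [hyη, neg_neg] at h
  by_contra hK
  exact hψa ((mul_eq_right₀ hK).1 h)

lemma heatT_eq_convolution (ht : t ≠ 0) (f : (Fin n → ℚ_[p]) → ℂ) :
    heatT μ ψ A t f = heatK μ ψ A t ⋆[ContinuousLinearMap.mul ℂ ℂ, μ] f := by
  ext x
  simp [heatT, ht, convolution_def]

end HeatKernel

theorem memL20_convolution {μ : Measure (Fin n → ℚ_[p])} [μ.IsAddHaarMeasure]
    (hμ : μ (closedBall 0 1) = 1) {K : (Fin n → ℚ_[p]) → ℂ} {M : ℝ}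
    (hKc : Continuous K) (hKM : ∀ y, ‖K y‖ ≤ M) (hK : ∀ y, 1 < ‖y‖ → K y = 0)
    {f : (Fin n → ℚ_[p]) → ℂ} (hf : MemL20 μ f) :
    MemL20 μ (K ⋆[ContinuousLinearMap.mul ℂ ℂ, μ] f) ∧
      eLpNorm (K ⋆[ContinuousLinearMap.mul ℂ ℂ, μ] f) 2 μ ≤ ENNReal.ofReal M * eLpNorm f 2 μ := by
  obtain ⟨hf2, hfB, hf0⟩ := hf
  have hfB' : ∀ᵐ x ∂μ, x ∉ closedBall 0 1 → f x = 0 := by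
    simpa only [mem_closedBall_zero_iff, not_le] using hfB
  have hfint : Integrable f μ :=
    hf2.integrable_of_ae_notMem_eq_zero (hμ ▸ ENNReal.one_ne_top) hfB'
  have hKint : Integrable K μ := hKc.integrable_of_hasCompactSupport <|
    HasCompactSupport.intro (isCompact_closedBall 0 1) fun y hy =>
      hK y (by simpa only [mem_closedBall_zero_iff, not_le] using hy)
  have hsupp : ∀ x, 1 < ‖x‖ → (K ⋆[ContinuousLinearMap.mul ℂ ℂ, μ] f) x = 0 :=
    fun x hx => convolution_eq_zero_of_lt_norm hK hfB hx
  have hbound := eLpNorm_convolution_le measurableSet_closedBall hμ hKM hf2 hfB' fun x hx =>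
    hsupp x (by simpa only [mem_closedBall_zero_iff, not_le] using hx)
  refine ⟨⟨⟨(hKint.integrable_convolution _ hfint).aestronglyMeasurable,
    hbound.trans_lt (ENNReal.mul_lt_top ENNReal.ofReal_lt_top hf2.2)⟩, ae_of_all _ hsupp, ?_⟩,
    hbound⟩
  rw [integral_convolution _ hKint hfint, hf0, map_zero]

end PadicHeat

theorem heat_semigroup_bounded_on_L20_general {p n : ℕ} [Fact p.Prime]
    (μ : Measure (Fin n → ℚ_[p])) [μ.IsAddHaarMeasure]
    (hμ : μ (closedBall (0 : Fin n → ℚ_[p]) 1) = 1)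
    (β C₀ : ℝ) (hβ : 0 < β) (hC₀ : 0 < C₀)
    (A : (Fin n → ℚ_[p]) → ℝ) (g : ℝ → ℝ)
    (hrad : ∀ ξ : Fin n → ℚ_[p], A ξ = g ‖ξ‖)
    (hlow : ∀ ξ : Fin n → ℚ_[p], C₀ * ‖ξ‖ ^ β ≤ A ξ)
    (ψ : ℚ_[p] → ℂ) (hψcont : Continuous ψ)
    (hψadd : ∀ a b : ℚ_[p], ψ (a + b) = ψ a * ψ b)
    (hψnorm : ∀ a : ℚ_[p], ‖ψ a‖ = 1)
    (hψnontriv : ∃ a : ℚ_[p], ‖a‖ ≤ p ∧ ψ a ≠ 1) :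
    ∀ t : ℝ, 0 ≤ t → ∃ Ct : ℝ≥0∞, Ct ≠ ⊤ ∧
      ∀ f : (Fin n → ℚ_[p]) → ℂ, MemL20 μ f →
        MemL20 μ (heatT μ ψ A t f) ∧
        eLpNorm (heatT μ ψ A t f) 2 μ ≤ Ct * eLpNorm f 2 μ := by
  intro t ht
  rcases ht.eq_or_lt with rfl | ht
  · refine ⟨1, ENNReal.one_ne_top, fun f hf => ?_⟩
    have hT : heatT μ ψ A 0 f = f := funext fun x => if_pos rfl
    rw [hT, one_mul]
    exact ⟨hf, le_rfl⟩
  have hA : Measurable A := funext hrad ▸ measurable_comp_norm g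
  have hint := integrableOn_exp_neg_mul_of_le μ ℚ_[p] hA hC₀ hβ ht hlow
  refine ⟨ENNReal.ofReal (∫ ξ in {ξ | 1 < ‖ξ‖}, Real.exp (-(t * A ξ)) ∂μ), ENNReal.ofReal_ne_top,
    fun f hf => ?_⟩
  rw [heatT_eq_convolution μ ψ A t ht.ne']
  exact memL20_convolution hμ (continuous_heatK μ ψ A t hψcont hψnorm hA hint)
    (norm_heatK_le μ ψ A t hψnorm)
    (fun _ => heatK_eq_zero_of_one_lt_norm μ ψ A t hψadd hψnontriv g hrad) hf

/-- For every `t ≥ 0`, `T(t)` is a well-defined bounded linear operator from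
`L²₀(ℤ_p^n)` to itself: for `t > 0` and `f ∈ L²₀(ℤ_p^n)` the convolution `K(·,t) ∗ f` is square
integrable, vanishes (a.e.) outside `ℤ_p^n`, has zero mean, and its `L²` norm is bounded by a
constant (independent of `f`) times that of `f`. -/
theorem heat_semigroup_bounded_on_L20 {p n : ℕ} [Fact p.Prime] (hn : 0 < n)
    (μ : Measure (Fin n → ℚ_[p])) [μ.IsAddHaarMeasure]
    (hμ : μ (closedBall (0 : Fin n → ℚ_[p]) 1) = 1)
    (β C₀ C₁ : ℝ) (hβ : 0 < β) (hC₀ : 0 < C₀) (hC₁ : 0 < C₁)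
    (A : (Fin n → ℚ_[p]) → ℝ) (g : ℝ → ℝ)
    (hrad : ∀ ξ : Fin n → ℚ_[p], A ξ = g ‖ξ‖)
    (hlow : ∀ ξ : Fin n → ℚ_[p], C₀ * ‖ξ‖ ^ β ≤ A ξ)
    (hupp : ∀ ξ : Fin n → ℚ_[p], A ξ ≤ C₁ * ‖ξ‖ ^ β)
    (ψ : ℚ_[p] → ℂ) (hψcont : Continuous ψ)
    (hψadd : ∀ a b : ℚ_[p], ψ (a + b) = ψ a * ψ b)
    (hψnorm : ∀ a : ℚ_[p], ‖ψ a‖ = 1)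
    (hψtriv : ∀ a : ℚ_[p], ‖a‖ ≤ 1 → ψ a = 1)
    (hψnontriv : ∃ a : ℚ_[p], ‖a‖ ≤ p ∧ ψ a ≠ 1) :
    ∀ t : ℝ, 0 ≤ t → ∃ Ct : ℝ≥0∞, Ct ≠ ⊤ ∧
      ∀ f : (Fin n → ℚ_[p]) → ℂ, MemL20 μ f →
        MemL20 μ (heatT μ ψ A t f) ∧
        eLpNorm (heatT μ ψ A t f) 2 μ ≤ Ct * eLpNorm f 2 μ :=
  heat_semigroup_bounded_on_L20_general μ hμ β C₀ hβ hC₀ A g hrad hlow ψ hψcont hψadd hψnorm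
    hψnontriv
end
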